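/- arXiv:2602.19691 — 7 statements merged into one kernel-verified Lean document; each statement's English description precedes it below -/
import Mathlib

section
/- Let m ∈ ℕ₊, k ∈ ℕ and q = (q_1,…,q_m) ∈ ℝ^m, and define B_m(q;k) = 2^{−m} Σ_{ν ∈ {−1,1}^m} (∏_{i=1}^m ν_i) · (Σ_{i=1}^m ν_i q_i)^k. Then: (i) if k < m, B_m(q;k) = 0; (ii) B_m(q;m) = m! · ∏_{i=1}^m q_i. -/
open scoped BigOperators

/-- The signed sum `B_m(q;k) = 2^{−m} Σ_{ν ∈ {−1,1}^m} (Π_i ν_i) (Σ_i ν_i q_i)^k`,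
where sign vectors are encoded as `ν : Fin m → ℤˣ`. -/
noncomputable def signedPowerSum (m : ℕ) (q : Fin m → ℝ) (k : ℕ) : ℝ :=
  (2 : ℝ)⁻¹ ^ m * ∑ ν : Fin m → ℤˣ,
    (∏ i, ((ν i : ℤ) : ℝ)) * (∑ i, ((ν i : ℤ) : ℝ) * q i) ^ k

lemma sum_units (f : ℤˣ → ℝ) : ∑ ε : ℤˣ, f ε = f 1 + f (-1) := by
  have h : (Finset.univ : Finset ℤˣ) = {1, -1} := by decide
  rw [h, Finset.sum_insert (by decide), Finset.sum_singleton]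

lemma key_expand (m : ℕ) (q : Fin (m+1) → ℝ) (k : ℕ) :
    (∑ ν : Fin (m+1) → ℤˣ, (∏ i, ((ν i : ℤ) : ℝ)) * (∑ i, ((ν i : ℤ) : ℝ) * q i) ^ k)
    = ∑ j ∈ Finset.range (k+1),
        ((1:ℝ) + (-1)^(j+1)) * ((q 0)^j * (k.choose j : ℝ) *
        (∑ ν : Fin m → ℤˣ, (∏ i, ((ν i : ℤ) : ℝ)) *
          (∑ i, ((ν i : ℤ) : ℝ) * q i.succ) ^ (k - j))) := by
  calc
    (∑ ν : Fin (m+1) → ℤˣ, (∏ i, ((ν i : ℤ) : ℝ)) * (∑ i, ((ν i : ℤ) : ℝ) * q i) ^ k)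
      = ∑ ε : ℤˣ, ∑ ν : Fin m → ℤˣ,
          (((ε : ℤ) : ℝ) * ∏ i, ((ν i : ℤ) : ℝ)) *
          (((ε : ℤ) : ℝ) * q 0 + ∑ i, ((ν i : ℤ) : ℝ) * q i.succ) ^ k := by
        rw [← Equiv.sum_comp (Fin.consEquiv fun _ => ℤˣ)
          (fun ν => (∏ i, ((ν i : ℤ) : ℝ)) * (∑ i, ((ν i : ℤ) : ℝ) * q i) ^ k),
          Fintype.sum_prod_type]
        simp [Fin.consEquiv, Fin.prod_univ_succ, Fin.sum_univ_succ]
    _ = ∑ ε : ℤˣ, ∑ ν : Fin m → ℤˣ, ∑ j ∈ Finset.range (k+1),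
          ((ε : ℤ) : ℝ)^(j+1) * ((q 0)^j * (k.choose j : ℝ) *
            ((∏ i, ((ν i : ℤ) : ℝ)) * (∑ i, ((ν i : ℤ) : ℝ) * q i.succ) ^ (k - j))) := by
        refine Finset.sum_congr rfl fun ε _ => Finset.sum_congr rfl fun ν _ => ?_
        rw [add_pow, Finset.mul_sum]
        refine Finset.sum_congr rfl fun j _ => ?_
        ring
    _ = ∑ j ∈ Finset.range (k+1), ∑ ε : ℤˣ, ∑ ν : Fin m → ℤˣ,
          ((ε : ℤ) : ℝ)^(j+1) * ((q 0)^j * (k.choose j : ℝ) *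
            ((∏ i, ((ν i : ℤ) : ℝ)) * (∑ i, ((ν i : ℤ) : ℝ) * q i.succ) ^ (k - j))) := by
        rw [show (∑ ε : ℤˣ, ∑ ν : Fin m → ℤˣ, ∑ j ∈ Finset.range (k+1),
          ((ε : ℤ) : ℝ)^(j+1) * ((q 0)^j * (k.choose j : ℝ) *
            ((∏ i, ((ν i : ℤ) : ℝ)) * (∑ i, ((ν i : ℤ) : ℝ) * q i.succ) ^ (k - j))))
          = ∑ ε : ℤˣ, ∑ j ∈ Finset.range (k+1), ∑ ν : Fin m → ℤˣ,
          ((ε : ℤ) : ℝ)^(j+1) * ((q 0)^j * (k.choose j : ℝ) *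
            ((∏ i, ((ν i : ℤ) : ℝ)) * (∑ i, ((ν i : ℤ) : ℝ) * q i.succ) ^ (k - j)))
          from Finset.sum_congr rfl fun ε _ => Finset.sum_comm]
        exact Finset.sum_comm
    _ = _ := by
        refine Finset.sum_congr rfl fun j _ => ?_
        simp only [← Finset.mul_sum, ← Finset.sum_mul]
        rw [sum_units (fun ε => ((ε : ℤ) : ℝ)^(j+1))]
        simp [Finset.mul_sum]

lemma T_eq : ∀ m (q : Fin m → ℝ) (k : ℕ), k ≤ m →
    (∑ ν : Fin m → ℤˣ, (∏ i, ((ν i : ℤ) : ℝ)) * (∑ i, ((ν i : ℤ) : ℝ) * q i) ^ k)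
    = if k = m then 2 ^ m * (m.factorial : ℝ) * ∏ i, q i else 0 := by
  intro m
  induction m with
  | zero =>
    intro q k hk
    interval_cases k
    simp
  | succ m ih =>
    intro q k hk
    rw [key_expand]
    rcases Nat.lt_or_ge k (m+1) with hlt | hge
    · rw [if_neg (Nat.ne_of_lt hlt)]
      refine Finset.sum_eq_zero fun j hj => ?_
      rcases Nat.even_or_odd j with he | ho
      · have : ((1:ℝ) + (-1)^(j+1)) = 0 := by
          rw [Odd.neg_one_pow (he.add_one)]; ring
        rw [this, zero_mul]
      · have hj1 : 1 ≤ j := ho.pos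
        have hjk' : j ≤ k := Nat.lt_succ_iff.mp (Finset.mem_range.mp hj)
        have hkj : k - j ≤ m := by omega
        have hne : k - j ≠ m := by omega
        rw [ih _ _ hkj, if_neg hne, mul_zero, mul_zero]
    · have hk1 : k = m + 1 := le_antisymm hk hge
      subst hk1
      rw [if_pos rfl]
      rw [Finset.sum_eq_single 1]
      · have h1 : m + 1 - 1 = m := by omega
        rw [h1, ih _ _ (le_refl m), if_pos rfl]
        have : ∏ i, q i = q 0 * ∏ i : Fin m, q i.succ := Fin.prod_univ_succ q
        rw [this]
        have hodd : ((1:ℝ) + (-1)^(1+1)) = 2 := by norm_num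
        rw [hodd]
        rw [Nat.choose_one_right]
        push_cast [Nat.factorial_succ]
        ring
      · intro j hj hne1
        rcases Nat.even_or_odd j with he | ho
        · have : ((1:ℝ) + (-1)^(j+1)) = 0 := by
            rw [Odd.neg_one_pow (he.add_one)]; ring
          rw [this, zero_mul]
        · have hj3 : 3 ≤ j := by
            rcases ho with ⟨t, ht⟩; omega
          have hjk : j ≤ m + 1 := by
            simp [Finset.mem_range] at hj; omega
          have hkj : m + 1 - j ≤ m := by omega
          have hne : m + 1 - j ≠ m := by omega
          rw [ih _ _ hkj, if_neg hne, mul_zero, mul_zero]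
      · intro h
        exact absurd (Finset.mem_range.mpr (by omega)) h

/-- **Lemma B.2**: if `k < m` then `B_m(q;k) = 0`, and `B_m(q;m) = m! · Π_i q_i`. -/
theorem signedPowerSum_eq (m : ℕ) (hm : 0 < m) (k : ℕ) (q : Fin m → ℝ) :
    (k < m → signedPowerSum m q k = 0) ∧
    signedPowerSum m q m = (Nat.factorial m : ℝ) * ∏ i, q i := by

  constructor
  · intro hk
    unfold signedPowerSum
    rw [T_eq m q k hk.le, if_neg hk.ne, mul_zero]
  · unfold signedPowerSum
    rw [T_eq m q m le_rfl, if_pos rfl, ← mul_assoc, ← mul_assoc, ← mul_pow]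
    norm_num
end

section
/- Let d, K ∈ ℕ₊ and let c_{i,j} ∈ ℝ be given for all i, j ∈ {1,…,K}^d. Then for every x ∈ [0,1)^d, Σ_{i,j ∈ {1,…,K}^d} c_{i,j} 1_{Ω_{i,j}^K}(x) = Σ_{j ∈ {1,…,K}^d} ( Σ_{i ∈ {1,…,K}^d} c_{i,j} 1_{Ω_i^K}(x) ) · 1_{Ω_{𝟙,j}^K}( x − Σ_{i ∈ {1,…,K}^d} a_i^K 1_{Ω_i^K}(x) ), where 𝟙 = (1,…,1) ∈ {1,…,K}^d. -/
open scoped BigOperators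

/-- The coarse cell `Ω_i^K = Π_l [(i_l−1)/K, i_l/K)`, indexed zero-based by
`i : Fin d → Fin K`. -/
def coarseCell (d K : ℕ) (i : Fin d → Fin K) : Set (Fin d → ℝ) :=
  {x | ∀ l, (i l : ℝ) / K ≤ x l ∧ x l < ((i l : ℝ) + 1) / K}

/-- The refined cell `Ω_{i,j}^K = Π_l [((i_l−1)K + j_l − 1)/K², ((i_l−1)K + j_l)/K²)`,
indexed zero-based by `i, j : Fin d → Fin K`. -/
def refinedCell (d K : ℕ) (i j : Fin d → Fin K) : Set (Fin d → ℝ) :=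
  {x | ∀ l, ((i l : ℝ) * K + (j l : ℝ)) / (K : ℝ) ^ 2 ≤ x l ∧
      x l < ((i l : ℝ) * K + (j l : ℝ) + 1) / (K : ℝ) ^ 2}

/-- **Lemma B.6 (multiscale reformulation of piecewise constants)**: for every
`x ∈ [0,1)^d`,
`Σ_{i,j} c_{i,j} 1_{Ω_{i,j}^K}(x) = Σ_j (Σ_i c_{i,j} 1_{Ω_i^K}(x)) ·
  1_{Ω_{𝟙,j}^K}(x − Σ_i a_i^K 1_{Ω_i^K}(x))`,
where `a_i^K` is the lower-left corner of `Ω_i^K` and `𝟙` is the first coarse index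
(encoded zero-based as `0`). -/
theorem piecewise_constant_multiscale (d K : ℕ) (hd : 0 < d) (hK : 0 < K)
    (c : (Fin d → Fin K) → (Fin d → Fin K) → ℝ)
    (x : Fin d → ℝ) (hx : ∀ l, 0 ≤ x l ∧ x l < 1) :
    ∑ i : Fin d → Fin K, ∑ j : Fin d → Fin K,
        c i j * Set.indicator (refinedCell d K i j) (fun _ => (1 : ℝ)) x =
      ∑ j : Fin d → Fin K,
        (∑ i : Fin d → Fin K, c i j * Set.indicator (coarseCell d K i) (fun _ => (1 : ℝ)) x) *
          Set.indicator (refinedCell d K (fun _ => (⟨0, hK⟩ : Fin K)) j) (fun _ => (1 : ℝ))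
            (fun l => x l -
              ∑ i : Fin d → Fin K,
                ((i l : ℝ) / K) * Set.indicator (coarseCell d K i) (fun _ => (1 : ℝ)) x) := by
  classical
  have hKr : (0:ℝ) < K := by exact_mod_cast hK
  have hK2 : (0:ℝ) < (K:ℝ)^2 := by positivity
  have hxn : ∀ l, (0:ℝ) ≤ (K:ℝ) * x l := fun l => mul_nonneg hKr.le (hx l).1
  have hlt : ∀ l, (K:ℝ) * x l < K := by
    intro l; nlinarith [(hx l).2]
  set n : Fin d → Fin K := fun l => ⟨⌊(K:ℝ) * x l⌋₊, by
    have := (Nat.floor_lt (hxn l)).2 (by exact_mod_cast hlt l)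
    exact_mod_cast this⟩ with hn
  have hnval : ∀ l, ((n l : ℕ) : ℝ) = (⌊(K:ℝ) * x l⌋₊ : ℝ) := fun l => rfl
  have hmem : ∀ i : Fin d → Fin K, x ∈ coarseCell d K i ↔ i = n := by
    intro i
    constructor
    · intro h
      funext l
      have h1 := (h l).1
      have h2 := (h l).2
      rw [div_le_iff₀ hKr] at h1
      rw [lt_div_iff₀ hKr] at h2
      apply Fin.ext
      have hf : ⌊(K:ℝ) * x l⌋₊ = (i l : ℕ) := by
        rw [Nat.floor_eq_iff (hxn l)]
        constructor <;> nlinarith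
      simp [hn, hf]
    · rintro rfl
      intro l
      have hfl := Nat.floor_le (hxn l)
      have hfu := Nat.lt_floor_add_one ((K:ℝ) * x l)
      constructor
      · rw [div_le_iff₀ hKr]
        rw [hnval l] at *
        nlinarith
      · rw [lt_div_iff₀ hKr]
        rw [hnval l] at *
        nlinarith
  have hind : ∀ i : Fin d → Fin K,
      Set.indicator (coarseCell d K i) (fun _ => (1:ℝ)) x = if i = n then 1 else 0 := by
    intro i
    rw [Set.indicator_apply]
    simp [hmem i]
  have hrefl : ∀ (i j : Fin d → Fin K), x ∈ refinedCell d K i j → i = n := by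
    intro i j h
    funext l
    obtain ⟨h1, h2⟩ := h l
    rw [div_le_iff₀ hK2] at h1
    rw [lt_div_iff₀ hK2] at h2
    have hjK : ((j l : ℕ) : ℝ) + 1 ≤ K := by exact_mod_cast (j l).2
    have hj0 : (0:ℝ) ≤ ((j l : ℕ) : ℝ) := by positivity
    apply Fin.ext
    have hf : ⌊(K:ℝ) * x l⌋₊ = (i l : ℕ) := by
      rw [Nat.floor_eq_iff (hxn l)]
      constructor <;> nlinarith
    simp [hn, hf]
  have hshift : ∀ j : Fin d → Fin K,
      ((fun l => x l - ((n l : ℕ) : ℝ)/K) ∈ refinedCell d K (fun _ => (⟨0,hK⟩ : Fin K)) j) ↔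
      x ∈ refinedCell d K n j := by
    intro j
    simp only [refinedCell, Set.mem_setOf_eq]
    refine forall_congr' fun l => ?_
    have e : ((n l : ℕ) : ℝ)/K * (K:ℝ)^2 = ((n l : ℕ) : ℝ) * K := by
      field_simp
    have hz : (((⟨0,hK⟩ : Fin K) : ℕ) : ℝ) = 0 := by norm_num
    rw [hz]
    constructor
    · rintro ⟨h1, h2⟩
      rw [div_le_iff₀ hK2] at h1
      rw [lt_div_iff₀ hK2] at h2
      constructor
      · rw [div_le_iff₀ hK2]; nlinarith
      · rw [lt_div_iff₀ hK2]; nlinarith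
    · rintro ⟨h1, h2⟩
      rw [div_le_iff₀ hK2] at h1
      rw [lt_div_iff₀ hK2] at h2
      constructor
      · rw [div_le_iff₀ hK2]; nlinarith
      · rw [lt_div_iff₀ hK2]; nlinarith
  have hyeq : (fun l => x l -
      ∑ i : Fin d → Fin K,
        ((i l : ℝ) / K) * Set.indicator (coarseCell d K i) (fun _ => (1 : ℝ)) x)
      = fun l => x l - ((n l : ℕ) : ℝ)/K := by
    funext l
    congr 1
    simp only [hind, mul_ite, mul_one, mul_zero, Finset.sum_ite_eq', Finset.mem_univ, if_true]
  rw [hyeq]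
  have hLHS : ∀ i : Fin d → Fin K, i ≠ n →
      (∑ j : Fin d → Fin K, c i j * Set.indicator (refinedCell d K i j) (fun _ => (1:ℝ)) x) = 0 := by
    intro i hi
    apply Finset.sum_eq_zero
    intro j _
    rw [Set.indicator_apply, if_neg (fun h => hi (hrefl i j h)), mul_zero]
  rw [Finset.sum_eq_single n (fun i _ hi => hLHS i hi) (fun h => absurd (Finset.mem_univ n) h)]
  apply Finset.sum_congr rfl
  intro j _
  simp only [hind, mul_ite, mul_one, mul_zero, Finset.sum_ite_eq', Finset.mem_univ, if_true]
  congr 1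
  rw [Set.indicator_apply, Set.indicator_apply, if_congr (hshift j) rfl rfl]
end

section
/- Let φ : ℝ → ℝ be Heaviside-like with constant C₁ > 0. For any reals a < b and any δ ∈ (0, (b−a)/3), there exists ε₀ ∈ (0,1) (depending on φ, a, b, δ) such that for every ε ∈ (0, ε₀) there exists a neural network g ∈ H^{φ,2}(1, 1, 2, 4C₁(|a|+|b|+1)/(εδ)) satisfying: (i) |g(x) − 1_{[a,b)}(x)| < ε for all x ∉ [a, a+δ] ∪ [b−δ, b]; and (ii) sup_{x ∈ ℝ} |g(x)| ≤ 2(C₁ + 1). -/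
open scoped BigOperators

noncomputable def midForward (φ : ℝ → ℝ) (M : ℕ) :
    List ((Fin M → Fin M → ℝ) × (Fin M → ℝ)) → (Fin M → ℝ) → Fin M → ℝ
  | [], z => z
  | layer :: rest, z =>
      midForward φ M rest (fun i => (∑ j, layer.1 i j * φ (z j)) + layer.2 i)

/-- Membership in the fully connected network class `H^{φ,L}(din, dout, M, B)` (for `L ≥ 2`):
`x ↦ W_L φ(W_{L−1} φ(⋯ φ(W_1 x + b_1) ⋯) + b_{L−1}) + b_L`, all entries bounded by `B`. -/
def IsNN (φ : ℝ → ℝ) (L din dout M : ℕ) (B : ℝ)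
    (f : (Fin din → ℝ) → Fin dout → ℝ) : Prop :=
  ∃ (W1 : Fin M → Fin din → ℝ) (b1 : Fin M → ℝ)
    (mid : List ((Fin M → Fin M → ℝ) × (Fin M → ℝ)))
    (WL : Fin dout → Fin M → ℝ) (bL : Fin dout → ℝ),
    mid.length = L - 2 ∧
    (∀ i j, |W1 i j| ≤ B) ∧ (∀ i, |b1 i| ≤ B) ∧
    (∀ p ∈ mid, (∀ i j, |p.1 i j| ≤ B) ∧ ∀ i, |p.2 i| ≤ B) ∧
    (∀ i j, |WL i j| ≤ B) ∧ (∀ i, |bL i| ≤ B) ∧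
    ∀ x i, f x i =
      (∑ j, WL i j * φ (midForward φ M mid (fun k => (∑ j', W1 k j' * x j') + b1 k) j)) + bL i

/-- Scalar-output networks `H^{φ,L}(din, 1, M, B)`. -/
def IsNNScalar (φ : ℝ → ℝ) (L din M : ℕ) (B : ℝ) (f : (Fin din → ℝ) → ℝ) : Prop :=
  ∃ g, IsNN φ L din 1 M B g ∧ ∀ x, f x = g x 0

/-- Scalar-input, scalar-output networks `H^{φ,L}(1, 1, M, B)`. -/
def IsNN1 (φ : ℝ → ℝ) (L M : ℕ) (B : ℝ) (f : ℝ → ℝ) : Prop :=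
  ∃ g, IsNN φ L 1 1 M B g ∧ ∀ x : ℝ, f x = g (fun _ => x) 0

/-- Heaviside-like activation: `|φ(t) − H(t)| ≤ C₁ · min{1, 1/|t|}` for all `t`. -/
def HeavisideLike (φ : ℝ → ℝ) (C₁ : ℝ) : Prop :=
  0 < C₁ ∧ (∀ t : ℝ, |φ t - (if 0 ≤ t then 1 else 0)| ≤ C₁) ∧
    ∀ t : ℝ, t ≠ 0 → |φ t - (if 0 ≤ t then 1 else 0)| ≤ C₁ / |t|

set_option maxHeartbeats 1600000 in
/-- **Lemma B.7 (1-D indicator approximation, Heaviside-like case)**: a width-2 two-layer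
network with parameter bound `4C₁(|a|+|b|+1)/(εδ)` approximates `1_{[a,b)}` within `ε`
outside `[a, a+δ] ∪ [b−δ, b]` and is globally bounded by `2(C₁+1)`. -/
theorem indicator_approximation_heaviside (φ : ℝ → ℝ) (C₁ : ℝ)
    (hφ : HeavisideLike φ C₁) (a b : ℝ) (hab : a < b)
    (δ : ℝ) (hδ0 : 0 < δ) (hδ : δ < (b - a) / 3) :
    ∃ ε₀ : ℝ, 0 < ε₀ ∧ ε₀ < 1 ∧ ∀ ε : ℝ, 0 < ε → ε < ε₀ →
      ∃ g : ℝ → ℝ,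
        IsNN1 φ 2 2 (4 * C₁ * (|a| + |b| + 1) / (ε * δ)) g ∧
        (∀ x : ℝ, x ∉ Set.Icc a (a + δ) ∪ Set.Icc (b - δ) b →
          |g x - Set.indicator (Set.Ico a b) (fun _ => (1 : ℝ)) x| < ε) ∧
        ∀ x : ℝ, |g x| ≤ 2 * (C₁ + 1) := by
  obtain ⟨hC, hφ1, hφ2⟩ := hφ
  have habs : 0 < |a| + |b| := by
    rcases lt_trichotomy a 0 with h | h | h
    · have : 0 < |a| := abs_pos.mpr (ne_of_lt h)
      linarith [abs_nonneg b]
    · have hb0 : 0 < b := by linarith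
      have : 0 < |b| := abs_pos.mpr (ne_of_gt hb0)
      linarith [abs_nonneg a]
    · have : 0 < |a| := abs_pos.mpr (ne_of_gt h)
      linarith [abs_nonneg b]
  obtain ⟨A, hA⟩ : ∃ A : ℝ, A = |a| + |b| + 1 := ⟨_, rfl⟩
  obtain ⟨m, hm⟩ : ∃ m : ℝ, m = max 1 (|a| + |b|) := ⟨_, rfl⟩
  have hA1 : 1 ≤ A := by rw [hA]; linarith
  have hm1 : 1 ≤ m := by rw [hm]; exact le_max_left _ _
  have hm0 : 0 < m := by linarith
  have hmA : m < A := by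
    rcases max_cases 1 (|a| + |b|) with ⟨h1, _⟩ | ⟨h1, _⟩ <;> rw [hm, h1, hA] <;> linarith
  have hmab : |a| + |b| ≤ m := by rw [hm]; exact le_max_right _ _
  refine ⟨min (1/2) (4 * C₁ / δ), lt_min (by norm_num) (by positivity),
    lt_of_le_of_lt (min_le_left _ _) (by norm_num), ?_⟩
  intro ε hε hεε
  have hεhalf : ε < 1/2 := lt_of_lt_of_le hεε (min_le_left _ _)
  have hεC : ε < 4 * C₁ / δ := lt_of_lt_of_le hεε (min_le_right _ _)
  have hεδ : ε * δ < 4 * C₁ := (lt_div_iff₀ hδ0).mp hεC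
  obtain ⟨B, hB⟩ : ∃ B : ℝ, B = 4 * C₁ * A / (ε * δ) := ⟨_, rfl⟩
  have hB0 : 0 < B := by rw [hB, hA]; positivity
  obtain ⟨w, hw⟩ : ∃ w : ℝ, w = B / m := ⟨_, rfl⟩
  have hw0 : 0 < w := by rw [hw]; positivity
  obtain ⟨c, hc⟩ : ∃ c : ℝ, c = a + δ / 2 := ⟨_, rfl⟩
  obtain ⟨d, hd⟩ : ∃ d : ℝ, d = b - δ / 2 := ⟨_, rfl⟩
  have hcb : |c| ≤ |a| + |b| := by
    have h1 : a < c := by rw [hc]; linarith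
    have h2 : c < b := by rw [hc]; linarith
    rcases abs_cases c with ⟨h, _⟩ | ⟨h, _⟩ <;> rcases abs_cases a with ⟨ha', _⟩ | ⟨ha', _⟩ <;>
      rcases abs_cases b with ⟨hb', _⟩ | ⟨hb', _⟩ <;> linarith
  have hdb : |d| ≤ |a| + |b| := by
    have h1 : a < d := by rw [hd]; linarith
    have h2 : d < b := by rw [hd]; linarith
    rcases abs_cases d with ⟨h, _⟩ | ⟨h, _⟩ <;> rcases abs_cases a with ⟨ha', _⟩ | ⟨ha', _⟩ <;>
      rcases abs_cases b with ⟨hb', _⟩ | ⟨hb', _⟩ <;> linarith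
  have hB1 : 1 ≤ B := by
    rw [hB, le_div_iff₀ (by positivity)]
    nlinarith
  have hwB : w ≤ B := by
    rw [hw]
    exact div_le_self (le_of_lt hB0) hm1
  have hwm : w * m = B := by
    rw [hw]
    field_simp
  -- the key error bound
  have hkey : ∀ t : ℝ, w * δ / 2 ≤ |t| → |φ t - (if 0 ≤ t then 1 else 0)| < ε / 2 := by
    intro t ht
    have hwd : 0 < w * δ / 2 := by positivity
    have ht0 : t ≠ 0 := by
      intro h; rw [h, abs_zero] at ht; linarith
    have h1 : |φ t - (if 0 ≤ t then 1 else 0)| ≤ C₁ / |t| := hφ2 t ht0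
    have h2 : C₁ / |t| ≤ C₁ / (w * δ / 2) :=
      div_le_div_of_nonneg_left (le_of_lt hC) hwd ht
    have h3 : C₁ / (w * δ / 2) = ε * m / (2 * A) := by
      rw [hw, hB]
      have hA0 : (0:ℝ) < A := by linarith
      field_simp
      ring
    have h4 : ε * m / (2 * A) < ε / 2 := by
      rw [div_lt_div_iff₀ (by linarith) (by norm_num)]
      nlinarith
    calc |φ t - (if 0 ≤ t then 1 else 0)| ≤ C₁ / |t| := h1
      _ ≤ C₁ / (w * δ / 2) := h2
      _ = ε * m / (2 * A) := h3
      _ < ε / 2 := h4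
  have hkey1 : ∀ t : ℝ, w * δ / 2 ≤ t → |φ t - 1| < ε / 2 := by
    intro t ht
    have hwd : 0 < w * δ / 2 := by positivity
    have h0 : 0 ≤ t := by linarith
    have := hkey t (by rwa [abs_of_nonneg h0])
    simpa [h0] using this
  have hkey0 : ∀ t : ℝ, t ≤ -(w * δ / 2) → |φ t| < ε / 2 := by
    intro t ht
    have hwd : 0 < w * δ / 2 := by positivity
    have h0 : t < 0 := by linarith
    have habs' : w * δ / 2 ≤ |t| := by rw [abs_of_neg h0]; linarith
    have := hkey t habs'
    simpa [not_le.mpr h0] using this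
  rw [← hA, ← hB]
  refine ⟨fun x => φ (w * x - w * c) - φ (w * x - w * d), ?_, ?_, ?_⟩
  · -- network membership
    refine ⟨fun x i => φ (w * x 0 - w * c) - φ (w * x 0 - w * d), ?_, fun x => rfl⟩
    refine ⟨fun _ _ => w, fun k => if k = 0 then -(w * c) else -(w * d), [],
      fun _ k => if k = 0 then 1 else -1, fun _ => 0, rfl, ?_, ?_, ?_, ?_, ?_, ?_⟩
    · intro i j
      rwa [abs_of_pos hw0]
    · intro i
      by_cases h : i = 0 <;> simp only [h, if_true, if_false] <;>
        rw [abs_neg, abs_mul, abs_of_pos hw0]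
      · exact le_trans (mul_le_mul_of_nonneg_left (le_trans hcb hmab) hw0.le) hwm.le
      · exact le_trans (mul_le_mul_of_nonneg_left (le_trans hdb hmab) hw0.le) hwm.le
    · intro p hp; simp at hp
    · intro i j
      by_cases h : j = 0 <;> simp only [h, if_true, if_false]
      · simpa using hB1
      · simpa using hB1
    · intro i
      simpa using hB0.le
    · intro x i
      have hi : i = 0 := Subsingleton.elim _ _
      subst hi
      simp [midForward, Fin.sum_univ_two, Fin.sum_univ_one]
      ring_nf
  · -- approximation
    intro x hx
    simp only [Set.mem_union, Set.mem_Icc, not_or, not_and_or, not_le] at hx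
    obtain ⟨h1, h2⟩ := hx
    have hwd : (0:ℝ) < w * δ / 2 := by positivity
    rcases h1 with hxa | hxa
    · -- x < a
      have hi : Set.indicator (Set.Ico a b) (fun _ => (1:ℝ)) x = 0 := by
        apply Set.indicator_of_notMem
        simp only [Set.mem_Ico, not_and_or, not_le, not_lt]
        left; exact hxa
      rw [hi, sub_zero]
      have hu : w * x - w * c ≤ -(w * δ / 2) := by
        have h : x - c ≤ -(δ / 2) := by rw [hc]; linarith
        nlinarith [mul_le_mul_of_nonneg_left h (le_of_lt hw0)]
      have hv : w * x - w * d ≤ -(w * δ / 2) := by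
        have h : x - d ≤ -(δ / 2) := by rw [hd]; linarith
        nlinarith [mul_le_mul_of_nonneg_left h (le_of_lt hw0)]
      calc |φ (w * x - w * c) - φ (w * x - w * d)|
          ≤ |φ (w * x - w * c)| + |φ (w * x - w * d)| := abs_sub _ _
        _ < ε / 2 + ε / 2 := add_lt_add (hkey0 _ hu) (hkey0 _ hv)
        _ = ε := by ring
    · rcases h2 with hxb | hxb
      · -- a + δ < x < b - δ
        have hi : Set.indicator (Set.Ico a b) (fun _ => (1:ℝ)) x = 1 := by
          apply Set.indicator_of_mem
          constructor <;> linarith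
        rw [hi]
        have hu : w * δ / 2 ≤ w * x - w * c := by
          have h : δ / 2 ≤ x - c := by rw [hc]; linarith
          nlinarith [mul_le_mul_of_nonneg_left h (le_of_lt hw0)]
        have hv : w * x - w * d ≤ -(w * δ / 2) := by
          have h : x - d ≤ -(δ / 2) := by rw [hd]; linarith
          nlinarith [mul_le_mul_of_nonneg_left h (le_of_lt hw0)]
        calc |φ (w * x - w * c) - φ (w * x - w * d) - 1|
            = |(φ (w * x - w * c) - 1) - φ (w * x - w * d)| := by ring_nf
          _ ≤ |φ (w * x - w * c) - 1| + |φ (w * x - w * d)| := abs_sub _ _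
          _ < ε / 2 + ε / 2 := add_lt_add (hkey1 _ hu) (hkey0 _ hv)
          _ = ε := by ring
      · -- b < x
        have hi : Set.indicator (Set.Ico a b) (fun _ => (1:ℝ)) x = 0 := by
          apply Set.indicator_of_notMem
          simp only [Set.mem_Ico, not_and_or, not_le, not_lt]
          right; linarith
        rw [hi, sub_zero]
        have hba : 3 * δ < b - a := by linarith
        have hu : w * δ / 2 ≤ w * x - w * c := by
          have h : δ / 2 ≤ x - c := by rw [hc]; linarith
          nlinarith [mul_le_mul_of_nonneg_left h (le_of_lt hw0)]
        have hv : w * δ / 2 ≤ w * x - w * d := by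
          have h : δ / 2 ≤ x - d := by rw [hd]; linarith
          nlinarith [mul_le_mul_of_nonneg_left h (le_of_lt hw0)]
        calc |φ (w * x - w * c) - φ (w * x - w * d)|
            = |(φ (w * x - w * c) - 1) - (φ (w * x - w * d) - 1)| := by ring_nf
          _ ≤ |φ (w * x - w * c) - 1| + |φ (w * x - w * d) - 1| := abs_sub _ _
          _ < ε / 2 + ε / 2 := add_lt_add (hkey1 _ hu) (hkey1 _ hv)
          _ = ε := by ring
  · -- global bound
    intro x
    show |φ (w * x - w * c) - φ (w * x - w * d)| ≤ 2 * (C₁ + 1)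
    obtain ⟨u, hu⟩ : ∃ u : ℝ, u = w * x - w * c := ⟨_, rfl⟩
    obtain ⟨v, hv⟩ : ∃ v : ℝ, v = w * x - w * d := ⟨_, rfl⟩
    rw [← hu, ← hv]
    obtain ⟨Hu, hHu⟩ : ∃ Hu : ℝ, Hu = if 0 ≤ u then 1 else 0 := ⟨_, rfl⟩
    obtain ⟨Hv, hHv⟩ : ∃ Hv : ℝ, Hv = if 0 ≤ v then 1 else 0 := ⟨_, rfl⟩
    have h1 : |φ u - Hu| ≤ C₁ := hHu ▸ hφ1 u
    have h2 : |φ v - Hv| ≤ C₁ := hHv ▸ hφ1 v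
    have h3 : |Hu - Hv| ≤ 1 := by
      rw [hHu, hHv]; split_ifs <;> norm_num
    calc |φ u - φ v| = |(φ u - Hu) - (φ v - Hv) + (Hu - Hv)| := by ring_nf
      _ ≤ |(φ u - Hu) - (φ v - Hv)| + |Hu - Hv| := abs_add_le _ _
      _ ≤ |φ u - Hu| + |φ v - Hv| + |Hu - Hv| := by
          linarith [abs_sub (φ u - Hu) (φ v - Hv)]
      _ ≤ C₁ + C₁ + 1 := by linarith
      _ ≤ 2 * (C₁ + 1) := by linarith
end

section
/- Let φ : ℝ → ℝ be ReLU-like with constant C₂ > 0. For any reals a < b and any δ ∈ (0, (b−a)/3), there exists ε₀ ∈ (0,1) (depending on φ, a, b, δ) such that for every ε ∈ (0, ε₀) there exists a neural network g ∈ H^{φ,2}(1, 1, 4, 4C₂(|a|+|b|+1)/(εδ)) satisfying: (i) |g(x) − 1_{[a,b)}(x)| < ε for all x ∉ [a, a+δ] ∪ [b−δ, b]; and (ii) sup_{x ∈ ℝ} |g(x)| ≤ 2. -/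
open scoped BigOperators

/-- ReLU-like activation: `|φ(t) − max{t,0}| ≤ C₂` for all `t`. -/
def ReLULike (φ : ℝ → ℝ) (C₂ : ℝ) : Prop :=
  0 < C₂ ∧ ∀ t : ℝ, |φ t - max t 0| ≤ C₂

/-- Auxiliary: a unit ramp difference is between `0` and `d`. -/
lemma ramp_diff_aux (t d : ℝ) (hd : 0 ≤ d) :
    0 ≤ max t 0 - max (t - d) 0 ∧ max t 0 - max (t - d) 0 ≤ d := by
  rcases le_total t 0 with h | h
  · rw [max_eq_right h, max_eq_right (by linarith : t - d ≤ 0)]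
    constructor <;> linarith
  · rw [max_eq_left h]
    rcases le_total (t - d) 0 with h2 | h2
    · rw [max_eq_right h2]; constructor <;> linarith
    · rw [max_eq_left h2]; constructor <;> linarith

set_option maxHeartbeats 4000000 in
/-- **Lemma B.8 (1-D indicator approximation, ReLU-like case)**: a width-4 two-layer
network with parameter bound `4C₂(|a|+|b|+1)/(εδ)` approximates `1_{[a,b)}` within `ε`
outside `[a, a+δ] ∪ [b−δ, b]` and is globally bounded by `2`. -/
theorem indicator_approximation_relu (φ : ℝ → ℝ) (C₂ : ℝ)
    (hφ : ReLULike φ C₂) (a b : ℝ) (hab : a < b)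
    (δ : ℝ) (hδ0 : 0 < δ) (hδ : δ < (b - a) / 3) :
    ∃ ε₀ : ℝ, 0 < ε₀ ∧ ε₀ < 1 ∧ ∀ ε : ℝ, 0 < ε → ε < ε₀ →
      ∃ g : ℝ → ℝ,
        IsNN1 φ 2 4 (4 * C₂ * (|a| + |b| + 1) / (ε * δ)) g ∧
        (∀ x : ℝ, x ∉ Set.Icc a (a + δ) ∪ Set.Icc (b - δ) b →
          |g x - Set.indicator (Set.Ico a b) (fun _ => (1 : ℝ)) x| < ε) ∧
        ∀ x : ℝ, |g x| ≤ 2 := by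
  obtain ⟨hC₂, hφ'⟩ := hφ
  have hab0 : 0 < |a| + |b| := by
    have h1 : b ≤ |b| := le_abs_self b
    have h2 : -|a| ≤ a := neg_abs_le a
    linarith
  obtain ⟨A, hA⟩ : ∃ A : ℝ, A = |a| + |b| + 1 := ⟨_, rfl⟩
  obtain ⟨m, hm⟩ : ∃ m : ℝ, m = max (max |a| |b|) 1 := ⟨_, rfl⟩
  have hm1 : (1 : ℝ) ≤ m := hm ▸ le_max_right _ _
  have hm0 : (0 : ℝ) < m := lt_of_lt_of_le one_pos hm1
  have hA0 : (0 : ℝ) < A := by rw [hA]; linarith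
  have hmA : m < A := by
    rw [hm, hA]
    exact max_lt (max_lt (by linarith [abs_nonneg b]) (by linarith [abs_nonneg a]))
      (by linarith)
  have haM : |a| ≤ m := hm ▸ le_trans (le_max_left _ _) (le_max_left _ _)
  have hbM : |b| ≤ m := hm ▸ le_trans (le_max_right _ _) (le_max_left _ _)
  have habδ : a + δ < b - δ := by linarith
  have hadM : |a + δ| ≤ m := by
    rw [abs_le]
    constructor
    · have h2 := neg_abs_le a; linarith
    · have h2 := le_abs_self b; linarith
  have hbdM : |b - δ| ≤ m := by
    rw [abs_le]
    constructor
    · have h2 := neg_abs_le a; linarith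
    · have h2 := le_abs_self b; linarith
  refine ⟨min (1/2) (min (4*C₂*A/m) (4*C₂*A/δ)), ?_, ?_, ?_⟩
  · apply lt_min (by norm_num)
    apply lt_min <;> positivity
  · exact lt_of_le_of_lt (min_le_left _ _) (by norm_num)
  intro ε hε hεlt
  have hε2 : ε < 1/2 := lt_of_lt_of_le hεlt (min_le_left _ _)
  have hεm : ε < 4*C₂*A/m :=
    lt_of_lt_of_le hεlt (le_trans (min_le_right _ _) (min_le_left _ _))
  have hεδ : ε < 4*C₂*A/δ :=
    lt_of_lt_of_le hεlt (le_trans (min_le_right _ _) (min_le_right _ _))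
  obtain ⟨B, hB⟩ : ∃ B : ℝ, B = 4 * C₂ * A / (ε * δ) := ⟨_, rfl⟩
  obtain ⟨s, hs⟩ : ∃ s : ℝ, s = B / m := ⟨_, rfl⟩
  obtain ⟨c, hc⟩ : ∃ c : ℝ, c = m * ε / (4 * C₂ * A) := ⟨_, rfl⟩
  have hB0 : (0 : ℝ) < B := by rw [hB]; positivity
  have hs0 : (0 : ℝ) < s := by rw [hs]; positivity
  have hc0 : (0 : ℝ) < c := by rw [hc]; positivity
  have hsB : s ≤ B := by rw [hs]; exact div_le_self hB0.le hm1
  have hsm : s * m = B := by rw [hs]; field_simp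
  have hc1 : c ≤ 1 := by
    rw [hc, div_le_one (by positivity)]
    have := (lt_div_iff₀ hm0).mp hεm
    nlinarith
  have h1B : (1 : ℝ) ≤ B := by
    rw [hB, le_div_iff₀ (by positivity)]
    have := (lt_div_iff₀ hδ0).mp hεδ
    nlinarith
  have hcB : c ≤ B := hc1.trans h1B
  have hcsδ : c * (s * δ) = 1 := by
    rw [hc, hs, hB]
    field_simp
  have herr : 4 * c * C₂ < ε := by
    have h4 : 4 * c * C₂ = m * ε / A := by rw [hc]; field_simp
    rw [h4, div_lt_iff₀ hA0]
    nlinarith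
  obtain ⟨gf, hgf⟩ : ∃ g : ℝ → ℝ, g = fun x =>
      c * φ (s*x - s*a) - c * φ (s*x - s*(a+δ))
        - c * φ (s*x - s*(b-δ)) + c * φ (s*x - s*b) := ⟨_, rfl⟩
  obtain ⟨P, hP⟩ : ∃ P : ℝ → ℝ, P = fun x =>
      c * max (s*x - s*a) 0 - c * max (s*x - s*(a+δ)) 0
        - c * max (s*x - s*(b-δ)) 0 + c * max (s*x - s*b) 0 := ⟨_, rfl⟩
  have hgfx : ∀ x : ℝ, gf x =
      c * φ (s*x - s*a) - c * φ (s*x - s*(a+δ))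
        - c * φ (s*x - s*(b-δ)) + c * φ (s*x - s*b) := fun x => by rw [hgf]
  have hPx : ∀ x : ℝ, P x =
      c * max (s*x - s*a) 0 - c * max (s*x - s*(a+δ)) 0
        - c * max (s*x - s*(b-δ)) 0 + c * max (s*x - s*b) 0 := fun x => by rw [hP]
  have bnd : ∀ t : ℝ, |c * (φ t - max t 0)| ≤ c * C₂ := fun t => by
    rw [abs_mul, abs_of_pos hc0]
    exact mul_le_mul_of_nonneg_left (hφ' t) hc0.le
  have hkey : ∀ x, |gf x - P x| ≤ 4 * c * C₂ := by
    intro x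
    have E : gf x - P x =
        c * (φ (s*x - s*a) - max (s*x - s*a) 0)
        - c * (φ (s*x - s*(a+δ)) - max (s*x - s*(a+δ)) 0)
        - c * (φ (s*x - s*(b-δ)) - max (s*x - s*(b-δ)) 0)
        + c * (φ (s*x - s*b) - max (s*x - s*b) 0) := by
      rw [hgfx, hPx]; ring
    have b1 := bnd (s*x - s*a)
    have b2 := bnd (s*x - s*(a+δ))
    have b3 := bnd (s*x - s*(b-δ))
    have b4 := bnd (s*x - s*b)
    have t1 := abs_add_le (c * (φ (s*x - s*a) - max (s*x - s*a) 0)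
        - c * (φ (s*x - s*(a+δ)) - max (s*x - s*(a+δ)) 0)
        - c * (φ (s*x - s*(b-δ)) - max (s*x - s*(b-δ)) 0))
        (c * (φ (s*x - s*b) - max (s*x - s*b) 0))
    have t2 := abs_sub (c * (φ (s*x - s*a) - max (s*x - s*a) 0)
        - c * (φ (s*x - s*(a+δ)) - max (s*x - s*(a+δ)) 0))
        (c * (φ (s*x - s*(b-δ)) - max (s*x - s*(b-δ)) 0))
    have t3 := abs_sub (c * (φ (s*x - s*a) - max (s*x - s*a) 0))
        (c * (φ (s*x - s*(a+δ)) - max (s*x - s*(a+δ)) 0))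
    rw [E]
    linarith
  have hPbound : ∀ x, |P x| ≤ 1 := by
    intro x
    obtain ⟨d1l, d1u⟩ := ramp_diff_aux (s*x - s*a) (s*δ) (mul_nonneg hs0.le hδ0.le)
    obtain ⟨d2l, d2u⟩ := ramp_diff_aux (s*x - s*(b-δ)) (s*δ) (mul_nonneg hs0.le hδ0.le)
    have e2 : s*x - s*(a+δ) = (s*x - s*a) - s*δ := by ring
    have e4 : s*x - s*b = (s*x - s*(b-δ)) - s*δ := by ring
    have hPx' : P x = c * ((max (s*x - s*a) 0 - max ((s*x - s*a) - s*δ) 0)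
        - (max (s*x - s*(b-δ)) 0 - max ((s*x - s*(b-δ)) - s*δ) 0)) := by
      rw [hPx, e2, e4]; ring
    rw [hPx', abs_le]
    constructor <;> nlinarith [mul_le_mul_of_nonneg_left d1u hc0.le,
      mul_le_mul_of_nonneg_left d2u hc0.le,
      mul_nonneg hc0.le d1l, mul_nonneg hc0.le d2l]
  refine ⟨gf, ?_, ?_, ?_⟩
  · -- network membership
    rw [← hA, ← hB]
    refine ⟨fun x _ => gf (x 0),
      ⟨fun _ _ => s, ![-(s*a), -(s*(a+δ)), -(s*(b-δ)), -(s*b)], [],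
        fun _ => ![c, -c, -c, c], fun _ => 0, rfl, ?_, ?_, ?_, ?_, ?_, ?_⟩, fun x => rfl⟩
    · intro i j
      rw [abs_of_pos hs0]; exact hsB
    · intro i
      fin_cases i <;> simp [abs_mul, abs_of_pos hs0] <;>
        nlinarith [hsm, mul_le_mul_of_nonneg_left haM hs0.le,
          mul_le_mul_of_nonneg_left hadM hs0.le,
          mul_le_mul_of_nonneg_left hbdM hs0.le,
          mul_le_mul_of_nonneg_left hbM hs0.le]
    · intro p hp; simp at hp
    · intro i j
      fin_cases j <;> simp [abs_of_pos hc0] <;> exact hcB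
    · intro i; simpa using hB0.le
    · intro x i
      simp [hgf, midForward, Fin.sum_univ_four, Fin.sum_univ_one, sub_eq_add_neg, neg_mul]
  · -- approximation outside the transition bands
    intro x hx
    simp only [Set.mem_union, Set.mem_Icc, not_or, not_and, not_le] at hx
    obtain ⟨hx1, hx2⟩ := hx
    have hPind : P x = Set.indicator (Set.Ico a b) (fun _ => (1 : ℝ)) x := by
      by_cases h1 : a ≤ x
      · have h1' : a + δ < x := hx1 h1
        by_cases h2 : b - δ ≤ x
        · have h2' : b < x := hx2 h2
          have hnm : x ∉ Set.Ico a b := by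
            simp only [Set.mem_Ico, not_and, not_lt]
            exact fun _ => by linarith
          rw [Set.indicator_of_notMem hnm]
          have v1 : max (s*x - s*a) 0 = s*x - s*a :=
            max_eq_left (by nlinarith [mul_pos hs0 (show (0:ℝ) < x - a by linarith)])
          have v2 : max (s*x - s*(a+δ)) 0 = s*x - s*(a+δ) :=
            max_eq_left (by nlinarith [mul_pos hs0 (show (0:ℝ) < x - (a+δ) by linarith)])
          have v3 : max (s*x - s*(b-δ)) 0 = s*x - s*(b-δ) :=
            max_eq_left (by nlinarith [mul_pos hs0 (show (0:ℝ) < x - (b-δ) by linarith)])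
          have v4 : max (s*x - s*b) 0 = s*x - s*b :=
            max_eq_left (by nlinarith [mul_pos hs0 (show (0:ℝ) < x - b by linarith)])
          rw [hPx, v1, v2, v3, v4]; ring
        · push_neg at h2
          have hmem : x ∈ Set.Ico a b := ⟨h1, by linarith⟩
          rw [Set.indicator_of_mem hmem]
          have v1 : max (s*x - s*a) 0 = s*x - s*a :=
            max_eq_left (by nlinarith [mul_pos hs0 (show (0:ℝ) < x - a by linarith)])
          have v2 : max (s*x - s*(a+δ)) 0 = s*x - s*(a+δ) :=
            max_eq_left (by nlinarith [mul_pos hs0 (show (0:ℝ) < x - (a+δ) by linarith)])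
          have v3 : max (s*x - s*(b-δ)) 0 = 0 :=
            max_eq_right (by nlinarith [mul_nonneg hs0.le (show (0:ℝ) ≤ (b-δ) - x by linarith)])
          have v4 : max (s*x - s*b) 0 = 0 :=
            max_eq_right (by nlinarith [mul_nonneg hs0.le (show (0:ℝ) ≤ b - x by linarith)])
          rw [hPx, v1, v2, v3, v4]
          linear_combination hcsδ
      · push_neg at h1
        have hnm : x ∉ Set.Ico a b := by
          simp only [Set.mem_Ico, not_and, not_lt]
          exact fun h => absurd h (not_le.mpr h1)
        rw [Set.indicator_of_notMem hnm]
        have v1 : max (s*x - s*a) 0 = 0 :=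
          max_eq_right (by nlinarith [mul_nonneg hs0.le (show (0:ℝ) ≤ a - x by linarith)])
        have v2 : max (s*x - s*(a+δ)) 0 = 0 :=
          max_eq_right (by nlinarith [mul_nonneg hs0.le (show (0:ℝ) ≤ (a+δ) - x by linarith)])
        have v3 : max (s*x - s*(b-δ)) 0 = 0 :=
          max_eq_right (by nlinarith [mul_nonneg hs0.le (show (0:ℝ) ≤ (b-δ) - x by linarith)])
        have v4 : max (s*x - s*b) 0 = 0 :=
          max_eq_right (by nlinarith [mul_nonneg hs0.le (show (0:ℝ) ≤ b - x by linarith)])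
        rw [hPx, v1, v2, v3, v4]; ring
    calc |gf x - Set.indicator (Set.Ico a b) (fun _ => (1 : ℝ)) x|
        = |gf x - P x| := by rw [hPind]
      _ ≤ 4 * c * C₂ := hkey x
      _ < ε := herr
  · -- global bound
    intro x
    have tri : |gf x| ≤ |gf x - P x| + |P x| := by
      have h := abs_add_le (gf x - P x) (P x)
      simpa using h
    have h1 := hkey x
    have h2 := hPbound x
    linarith
end

section
/- Let φ : ℝ → ℝ satisfy |φ(x) − φ(y)| ≤ ‖φ‖_Lip |x − y| for all x, y ∈ ℝ with ‖φ‖_Lip ≥ 1, let d, M ∈ ℕ₊, L ≥ 2, τ ∈ (0,1], and let B ≥ max{1, |φ(0)|/(‖φ‖_Lip (d+1))}. Then there exists a finite set S of functions from [0,1]^d to ℝ with log |S| ≤ 2(L+d) M² · log( 4^{L+1} d (‖φ‖_Lip M)^L B^{L+1} / τ ) such that every g ∈ H^{φ,L}(d, 1, M, B) satisfies sup_{x ∈ [0,1]^d} |g(x) − h(x)| ≤ τ for some h ∈ S. In other words, the τ-covering number of H^{φ,L}(d, 1, M, B) in the uniform norm on [0,1]^d is at most ( 4^{L+1} d (‖φ‖_Lip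 M)^L B^{L+1} / τ )^{2(L+d)M²}. -/
open scoped BigOperators

private lemma bernoulli34 (n : ℕ) : ((n:ℝ) + 1) * 3 ^ n ≤ 4 ^ (n + 1) := by
  have h := one_add_mul_le_pow (a := (1/3 : ℝ)) (by norm_num) n
  have h34 : ((1:ℝ) + 1/3) ^ n * 3 ^ n = 4 ^ n := by
    rw [← mul_pow]; norm_num
  have h3 : (0:ℝ) < 3 ^ n := by positivity
  have h4 : ((4:ℝ)) ^ (n + 1) = 4 * 4 ^ n := by ring
  nlinarith [h, h3, mul_le_mul_of_nonneg_right h (le_of_lt h3)]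

private lemma grid_cover (B ε : ℝ) (N : ℕ) (hB : 0 < B) (hε : 0 < ε) (hN : B ≤ ε * N) :
    ∀ t : ℝ, |t| ≤ B → ∃ s ∈ (Finset.range N).image (fun k : ℕ => -B + ε * (2 * k + 1)),
      |t - s| ≤ ε := by
  intro t ht
  obtain ⟨ht1, ht2⟩ := abs_le.1 ht
  have hN0 : 0 < N := by
    rcases Nat.eq_zero_or_pos N with h | h
    · exfalso; rw [h] at hN; simp at hN; linarith
    · exact h
  set u := (t + B) / (2 * ε) with hu
  have hu0 : 0 ≤ u := by apply div_nonneg <;> linarith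
  have huN : u ≤ N := by
    rw [hu, div_le_iff₀ (by linarith)]
    nlinarith
  set k := min (N - 1) ⌊u⌋₊ with hk
  have hkN : k < N := by omega
  have hcast : ((N - 1 : ℕ) : ℝ) = (N : ℝ) - 1 := by
    push_cast [Nat.cast_sub hN0]; ring
  have hk1 : (k:ℝ) ≤ u := by
    rcases le_or_gt ⌊u⌋₊ (N - 1) with h | h
    · have : k = ⌊u⌋₊ := by omega
      rw [this]; exact Nat.floor_le hu0
    · have hkk : k = N - 1 := by omega
      have : (N : ℝ) ≤ u := by
        have : N ≤ ⌊u⌋₊ := by omega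
        exact (Nat.le_floor_iff hu0).1 this
      rw [hkk, hcast]; linarith
  have hk2 : u ≤ (k:ℝ) + 1 := by
    rcases le_or_gt ⌊u⌋₊ (N - 1) with h | h
    · have : k = ⌊u⌋₊ := by omega
      rw [this]; exact le_of_lt (Nat.lt_floor_add_one u)
    · have hkk : k = N - 1 := by omega
      rw [hkk, hcast]; linarith
  refine ⟨-B + ε * (2 * k + 1), Finset.mem_image.2 ⟨k, Finset.mem_range.2 hkN, rfl⟩, ?_⟩
  have heq : t - (-B + ε * (2 * k + 1)) = ε * (2 * (u - k) - 1) := by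
    rw [hu]; field_simp; ring
  rw [heq, abs_mul, abs_of_pos hε]
  have : |2 * (u - (k:ℝ)) - 1| ≤ 1 := abs_le.2 ⟨by linarith, by linarith⟩
  nlinarith

private lemma row_bound (φ : ℝ → ℝ) (Λ : ℝ) (hΛ : 1 ≤ Λ)
    (hlip : ∀ x y : ℝ, |φ x - φ y| ≤ Λ * |x - y|)
    (M : ℕ) (hM : 1 ≤ (M:ℝ)) (B ε R δ : ℝ)
    (hB : 1 ≤ B) (hε0 : 0 ≤ ε) (hε1 : ε ≤ 1) (hδ : 0 ≤ δ)
    (hR1 : 1 ≤ R) (hRB : B ≤ R) (hφ0 : |φ 0| ≤ Λ * R)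
    (W W' : Fin M → ℝ) (b b' : ℝ) (z z' : Fin M → ℝ)
    (hW : ∀ j, |W j| ≤ B) (hb : |b| ≤ B)
    (hWd : ∀ j, |W j - W' j| ≤ ε) (hbd : |b - b'| ≤ ε)
    (hz : ∀ j, |z j| ≤ R) (hzd : ∀ j, |z j - z' j| ≤ δ) :
    |(∑ j, W j * φ (z j)) + b| ≤ 3*Λ*B*M * R ∧
    |((∑ j, W j * φ (z j)) + b) - ((∑ j, W' j * φ (z' j)) + b')|
      ≤ 3*Λ*B*M * (δ + R * ε) := by
  have hΛM : 1 ≤ Λ * (M:ℝ) := by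
    nlinarith [mul_le_mul hΛ hM zero_le_one (by linarith : (0:ℝ) ≤ Λ)]
  have hΛMR : 1 ≤ Λ * M * R := by
    nlinarith [mul_le_mul hΛM hR1 zero_le_one (by linarith : (0:ℝ) ≤ Λ * (M:ℝ))]
  have hφz : ∀ j, |φ (z j)| ≤ 2*Λ*R := by
    intro j
    have h1 := hlip (z j) 0
    rw [sub_zero] at h1
    have h2 := abs_sub_abs_le_abs_sub (φ (z j)) (φ 0)
    have h3 := hz j
    nlinarith [abs_nonneg (z j)]
  have hsum1 : |∑ j, W j * φ (z j)| ≤ (M:ℝ) * (B * (2*Λ*R)) := by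
    calc |∑ j, W j * φ (z j)| ≤ ∑ j, |W j * φ (z j)| := Finset.abs_sum_le_sum_abs _ _
      _ ≤ ∑ _j : Fin M, B * (2*Λ*R) := by
          apply Finset.sum_le_sum
          intro j _
          rw [abs_mul]
          apply mul_le_mul (hW j) (hφz j) (abs_nonneg _) (by linarith)
      _ = (M:ℝ) * (B * (2*Λ*R)) := by
          rw [Finset.sum_const, Finset.card_univ, Fintype.card_fin, nsmul_eq_mul]
  constructor
  · have := abs_add_le (∑ j, W j * φ (z j)) b
    nlinarith [hb]
  · have hterm : ∀ j, |W j * φ (z j) - W' j * φ (z' j)| ≤ ε * (2*Λ*R) + (2*B) * (Λ * δ) := by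
      intro j
      have hd : |φ (z j) - φ (z' j)| ≤ Λ * δ := by
        have := hlip (z j) (z' j)
        have := hzd j
        nlinarith
      have hW' : |W' j| ≤ 2 * B := by
        have h1 := hW j
        have h2 := hWd j
        have := abs_sub_abs_le_abs_sub (W' j) (W j)
        rw [abs_sub_comm] at this
        linarith
      have heq : W j * φ (z j) - W' j * φ (z' j)
          = (W j - W' j) * φ (z j) + W' j * (φ (z j) - φ (z' j)) := by ring
      rw [heq]
      calc |(W j - W' j) * φ (z j) + W' j * (φ (z j) - φ (z' j))|
          ≤ |(W j - W' j) * φ (z j)| + |W' j * (φ (z j) - φ (z' j))| := abs_add_le _ _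
        _ ≤ ε * (2*Λ*R) + (2*B) * (Λ * δ) := by
            rw [abs_mul, abs_mul]
            have g1 : |W j - W' j| * |φ (z j)| ≤ ε * (2*Λ*R) :=
              mul_le_mul (hWd j) (hφz j) (abs_nonneg _) hε0
            have g2 : |W' j| * |φ (z j) - φ (z' j)| ≤ (2*B) * (Λ * δ) :=
              mul_le_mul hW' hd (abs_nonneg _) (by linarith)
            linarith
    have hsumd : |∑ j, (W j * φ (z j) - W' j * φ (z' j))|
        ≤ (M:ℝ) * (ε * (2*Λ*R) + (2*B) * (Λ * δ)) := by
      calc |∑ j, (W j * φ (z j) - W' j * φ (z' j))|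
          ≤ ∑ j, |W j * φ (z j) - W' j * φ (z' j)| := Finset.abs_sum_le_sum_abs _ _
        _ ≤ ∑ _j : Fin M, (ε * (2*Λ*R) + (2*B) * (Λ * δ)) :=
            Finset.sum_le_sum fun j _ => hterm j
        _ = (M:ℝ) * (ε * (2*Λ*R) + (2*B) * (Λ * δ)) := by
            rw [Finset.sum_const, Finset.card_univ, Fintype.card_fin, nsmul_eq_mul]
    have heq2 : ((∑ j, W j * φ (z j)) + b) - ((∑ j, W' j * φ (z' j)) + b')
        = (∑ j, (W j * φ (z j) - W' j * φ (z' j))) + (b - b') := by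
      rw [Finset.sum_sub_distrib]; ring
    rw [heq2]
    have habs := abs_add_le (∑ j, (W j * φ (z j) - W' j * φ (z' j))) (b - b')
    have key : (M:ℝ) * (ε * (2*Λ*R) + (2*B) * (Λ * δ)) + ε ≤ 3*Λ*B*M * (δ + R * ε) := by
      nlinarith [mul_le_mul_of_nonneg_right hΛMR hε0,
        mul_nonneg (mul_nonneg (by linarith : (0:ℝ) ≤ Λ) (by linarith : (0:ℝ) ≤ (M:ℝ))) hδ,
        mul_nonneg (mul_nonneg (mul_nonneg (by linarith : (0:ℝ) ≤ Λ)
          (by linarith : (0:ℝ) ≤ B)) (by linarith : (0:ℝ) ≤ (M:ℝ))) hδ]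
    linarith [hbd]

private lemma mid_bound (φ : ℝ → ℝ) (Λ : ℝ) (hΛ : 1 ≤ Λ)
    (hlip : ∀ x y : ℝ, |φ x - φ y| ≤ Λ * |x - y|)
    (M : ℕ) (hM : 1 ≤ (M:ℝ)) (B ε : ℝ) (hB : 1 ≤ B) (hε0 : 0 ≤ ε) (hε1 : ε ≤ 1)
    (l l' : List ((Fin M → Fin M → ℝ) × (Fin M → ℝ)))
    (hF : List.Forall₂ (fun p q => (∀ i j, |p.1 i j| ≤ B) ∧ (∀ i, |p.2 i| ≤ B) ∧
      (∀ i j, |p.1 i j - q.1 i j| ≤ ε) ∧ (∀ i, |p.2 i - q.2 i| ≤ ε)) l l') :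
    ∀ (R δ : ℝ) (z z' : Fin M → ℝ), 1 ≤ R → B ≤ R → |φ 0| ≤ Λ * R → 0 ≤ δ →
    (∀ j, |z j| ≤ R) → (∀ j, |z j - z' j| ≤ δ) →
    (∀ j, |midForward φ M l z j| ≤ (3*Λ*B*M) ^ l.length * R) ∧
    (∀ j, |midForward φ M l z j - midForward φ M l' z' j|
       ≤ (3*Λ*B*M) ^ l.length * (δ + l.length * R * ε)) := by
  induction hF with
  | nil =>
      intro R δ z z' _ _ _ _ hz hzd
      constructor
      · intro j; simpa [midForward] using hz j
      · intro j; simpa [midForward] using hzd j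
  | @cons p q l l' hpq hF ih =>
      intro R δ z z' hR1 hRB hφ0 hδ hz hzd
      obtain ⟨hp1, hp2, hq1, hq2⟩ := hpq
      have hΛB : 1 ≤ Λ * B := by
        nlinarith [mul_le_mul hΛ hB zero_le_one (by linarith : (0:ℝ) ≤ Λ)]
      have hΛBM : 1 ≤ Λ * B * (M:ℝ) := by
        nlinarith [mul_le_mul hΛB hM zero_le_one (by linarith : (0:ℝ) ≤ Λ * B)]
      have hK1 : 1 ≤ 3*Λ*B*(M:ℝ) := by nlinarith
      have hrow := fun i => row_bound φ Λ hΛ hlip M hM B ε R δ hB hε0 hε1 hδ hR1 hRB hφ0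
        (p.1 i) (q.1 i) (p.2 i) (q.2 i) z z' (hp1 i) (hp2 i) (hq1 i) (hq2 i) hz hzd
      set K := 3*Λ*B*(M:ℝ) with hKdef
      have hKR : R ≤ K * R := le_mul_of_one_le_left (by linarith) hK1
      have hKR1 : 1 ≤ K * R := by linarith
      have hKRB : B ≤ K * R := by linarith
      have hKφ0 : |φ 0| ≤ Λ * (K * R) := by
        have := mul_le_mul_of_nonneg_left hKR (by linarith : (0:ℝ) ≤ Λ)
        linarith
      have hKδ : 0 ≤ K * (δ + R * ε) := by
        apply mul_nonneg (by linarith)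
        have : 0 ≤ R * ε := mul_nonneg (by linarith) hε0
        linarith
      have hmain := ih (K * R) (K * (δ + R * ε))
        (fun i => (∑ j, p.1 i j * φ (z j)) + p.2 i)
        (fun i => (∑ j, q.1 i j * φ (z' j)) + q.2 i)
        hKR1 (by linarith) hKφ0 hKδ
        (fun i => (hrow i).1) (fun i => (hrow i).2)
      constructor
      · intro j
        have h := hmain.1 j
        have heq : midForward φ M (p :: l) z
            = midForward φ M l (fun i => (∑ j, p.1 i j * φ (z j)) + p.2 i) := by
          simp [midForward]
        rw [heq]
        calc |midForward φ M l (fun i => (∑ j, p.1 i j * φ (z j)) + p.2 i) j|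
            ≤ K ^ l.length * (K * R) := h
          _ = K ^ (p :: l).length * R := by
              rw [List.length_cons, pow_succ]; ring
      · intro j
        have h := hmain.2 j
        have heq : midForward φ M (p :: l) z
            = midForward φ M l (fun i => (∑ j, p.1 i j * φ (z j)) + p.2 i) := by
          simp [midForward]
        have heq' : midForward φ M (q :: l') z'
            = midForward φ M l' (fun i => (∑ j, q.1 i j * φ (z' j)) + q.2 i) := by
          simp [midForward]
        rw [heq, heq']
        calc |midForward φ M l (fun i => (∑ j, p.1 i j * φ (z j)) + p.2 i) j
              - midForward φ M l' (fun i => (∑ j, q.1 i j * φ (z' j)) + q.2 i) j|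
            ≤ K ^ l.length * (K * (δ + R * ε) + l.length * (K * R) * ε) := h
          _ = K ^ (p :: l).length * (δ + (p :: l).length * R * ε) := by
              rw [List.length_cons]; push_cast; ring

/-- Parameter space for our networks. -/
private def ParamType (d M n : ℕ) : Type :=
  (Fin M → Fin d → ℝ) × (Fin M → ℝ) ×
    (Fin n → (Fin M → Fin M → ℝ) × (Fin M → ℝ)) × (Fin M → ℝ) × ℝ

/-- Evaluation of a parameter tuple as a network. -/
private noncomputable def nnEval (φ : ℝ → ℝ) (d M n : ℕ) (θ : ParamType d M n)
    (x : Fin d → ℝ) : ℝ :=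
  (∑ j, θ.2.2.2.1 j * φ (midForward φ M (List.ofFn θ.2.2.1)
    (fun k => (∑ j', θ.1 k j' * x j') + θ.2.1 k) j)) + θ.2.2.2.2

/-- The grid of parameter tuples with all entries in `G`. -/
private def paramGrid (d M n : ℕ) (G : Finset ℝ) : Finset (ParamType d M n) :=
  (Fintype.piFinset fun _ : Fin M => Fintype.piFinset fun _ : Fin d => G) ×ˢ
  ((Fintype.piFinset fun _ : Fin M => G) ×ˢ
  (((Fintype.piFinset fun _ : Fin n =>
      (Fintype.piFinset fun _ : Fin M => Fintype.piFinset fun _ : Fin M => G) ×ˢ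
      (Fintype.piFinset fun _ : Fin M => G))) ×ˢ
  ((Fintype.piFinset fun _ : Fin M => G) ×ˢ G)))

private lemma paramGrid_card (d M n : ℕ) (G : Finset ℝ) :
    (paramGrid d M n G).card = G.card ^ (M*d + M + n*(M*M+M) + M + 1) := by
  rw [paramGrid]
  erw [Finset.card_product, Finset.card_product, Finset.card_product, Finset.card_product]
  simp [Fintype.card_piFinset, Finset.prod_const, Finset.card_univ, Fintype.card_fin,
    Finset.card_product]
  ring

set_option maxHeartbeats 1600000 in
private lemma net_approx (φ : ℝ → ℝ) (Λ : ℝ) (hΛ : 1 ≤ Λ)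
    (hlip : ∀ x y : ℝ, |φ x - φ y| ≤ Λ * |x - y|)
    (d M n : ℕ) (hd1 : 1 ≤ (d:ℝ)) (hM1 : 1 ≤ (M:ℝ))
    (B ε : ℝ) (hB1 : 1 ≤ B) (hε0 : 0 < ε) (hε1 : ε ≤ 1)
    (hφ0 : |φ 0| ≤ Λ * (B*((d:ℝ)+1)))
    (G : Finset ℝ) (hG : ∀ t : ℝ, |t| ≤ B → ∃ s ∈ G, |t - s| ≤ ε)
    (g : (Fin d → ℝ) → ℝ) (hg : IsNNScalar φ (n+2) d M B g) :
    ∃ θ ∈ paramGrid d M n G, ∀ x ∈ Set.Icc (0 : Fin d → ℝ) 1,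
      |g x - nnEval φ d M n θ x|
        ≤ ((n:ℝ)+2) * (3*Λ*B*(M:ℝ))^(n+1) * (B*((d:ℝ)+1)) * ε := by
  obtain ⟨g', ⟨W1, b1, mid, WL, bL, hlen, hW1, hb1, hmid, hWL, hbL, hg'⟩, hgg'⟩ := hg
  have hlen' : mid.length = n := by omega
  choose pk hpkG hpkd using hG
  have hΛB : 1 ≤ Λ * B := by
    nlinarith [mul_le_mul hΛ hB1 zero_le_one (by linarith : (0:ℝ) ≤ Λ)]
  have hΛBM : 1 ≤ Λ * B * (M:ℝ) := by
    nlinarith [mul_le_mul hΛB hM1 zero_le_one (by linarith : (0:ℝ) ≤ Λ * B)]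
  set K := 3*Λ*B*(M:ℝ) with hKdef
  have hK1 : 1 ≤ K := by rw [hKdef]; nlinarith
  have hKpow1 : ∀ m : ℕ, 1 ≤ K ^ m := fun m => one_le_pow₀ hK1
  set R₀ := B*((d:ℝ)+1) with hR0def
  have hR0B : B ≤ R₀ := by nlinarith
  have hR01 : 1 ≤ R₀ := by linarith
  have hmem : ∀ i : Fin n, mid.get (Fin.cast hlen'.symm i) ∈ mid :=
    fun i => mid.get_mem _
  refine ⟨(fun i j => pk (W1 i j) (hW1 i j),
           fun i => pk (b1 i) (hb1 i),
           fun i =>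
             (fun a b => pk ((mid.get (Fin.cast hlen'.symm i)).1 a b)
                ((hmid _ (hmem i)).1 a b),
              fun a => pk ((mid.get (Fin.cast hlen'.symm i)).2 a)
                ((hmid _ (hmem i)).2 a)),
           fun j => pk (WL 0 j) (hWL 0 j),
           pk (bL 0) (hbL 0)), ?_, ?_⟩
  · rw [paramGrid]
    refine Finset.mem_product.2 ⟨Fintype.mem_piFinset.2 fun i =>
        Fintype.mem_piFinset.2 fun j => hpkG _ _,
      Finset.mem_product.2 ⟨Fintype.mem_piFinset.2 fun i => hpkG _ _,
      Finset.mem_product.2 ⟨Fintype.mem_piFinset.2 fun i => Finset.mem_product.2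
        ⟨Fintype.mem_piFinset.2 fun a => Fintype.mem_piFinset.2 fun b_ => hpkG _ _,
         Fintype.mem_piFinset.2 fun a => hpkG _ _⟩,
      Finset.mem_product.2 ⟨Fintype.mem_piFinset.2 fun j => hpkG _ _, hpkG _ _⟩⟩⟩⟩
  · intro x hx
    obtain ⟨hx0, hx1⟩ := Set.mem_Icc.1 hx
    have hxj : ∀ j, |x j| ≤ 1 := by
      intro j
      have h0 : (0:ℝ) ≤ x j := by simpa using hx0 j
      have h1 : x j ≤ 1 := by simpa using hx1 j
      exact abs_le.2 ⟨by linarith, h1⟩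
    have hsum : ∀ (W : Fin d → ℝ) (c : ℝ), 0 ≤ c → (∀ j, |W j| ≤ c) →
        |∑ j', W j' * x j'| ≤ (d:ℝ) * c := by
      intro W c hc hW
      calc |∑ j', W j' * x j'| ≤ ∑ j', |W j' * x j'| := Finset.abs_sum_le_sum_abs _ _
        _ ≤ ∑ _j' : Fin d, c := Finset.sum_le_sum (fun j _ => by
            rw [abs_mul]
            calc |W j| * |x j| ≤ c * 1 := mul_le_mul (hW j) (hxj j) (abs_nonneg _) hc
              _ = c := mul_one c)
        _ = (d:ℝ) * c := by
            rw [Finset.sum_const, Finset.card_univ, Fintype.card_fin, nsmul_eq_mul]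
    have hz : ∀ k, |(∑ j', W1 k j' * x j') + b1 k| ≤ R₀ := by
      intro k
      have h1 := hsum (W1 k) B (by linarith) (hW1 k)
      have h2 := abs_add_le (∑ j', W1 k j' * x j') (b1 k)
      have h3 := hb1 k
      rw [hR0def]
      nlinarith
    have hzd : ∀ k, |((∑ j', W1 k j' * x j') + b1 k)
        - ((∑ j', pk (W1 k j') (hW1 k j') * x j') + pk (b1 k) (hb1 k))| ≤ ((d:ℝ)+1)*ε := by
      intro k
      have heq : ((∑ j', W1 k j' * x j') + b1 k)
          - ((∑ j', pk (W1 k j') (hW1 k j') * x j') + pk (b1 k) (hb1 k))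
          = (∑ j', (W1 k j' - pk (W1 k j') (hW1 k j')) * x j')
            + (b1 k - pk (b1 k) (hb1 k)) := by
        simp only [sub_mul, Finset.sum_sub_distrib]
        ring
      have h1 := hsum (fun j' => W1 k j' - pk (W1 k j') (hW1 k j')) ε (le_of_lt hε0)
        (fun j' => hpkd _ (hW1 k j'))
      have h2 := abs_add_le (∑ j', (W1 k j' - pk (W1 k j') (hW1 k j')) * x j')
        (b1 k - pk (b1 k) (hb1 k))
      have h3 : |b1 k - pk (b1 k) (hb1 k)| ≤ ε := hpkd _ (hb1 k)
      rw [heq]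
      nlinarith
    have hRn1 : 1 ≤ K^n * R₀ := by nlinarith [hKpow1 n]
    have hRnB : B ≤ K^n * R₀ := by nlinarith [hKpow1 n]
    have hφ0n : |φ 0| ≤ Λ * (K^n * R₀) := by
      have hR : R₀ ≤ K^n * R₀ := le_mul_of_one_le_left (by linarith) (hKpow1 n)
      have h := mul_le_mul_of_nonneg_left hR (by linarith : (0:ℝ) ≤ Λ)
      linarith
    have hδn : 0 ≤ K^n * (((d:ℝ)+1)*ε + (n:ℝ) * R₀ * ε) := by positivity
    have hδ0ε : ((d:ℝ)+1)*ε ≤ R₀*ε := by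
      apply mul_le_mul_of_nonneg_right ?_ (le_of_lt hε0)
      rw [hR0def]; nlinarith
    have hstep : K * (K^n * (((d:ℝ)+1)*ε + (n:ℝ) * R₀ * ε) + K^n * R₀ * ε)
        ≤ ((n:ℝ)+2) * K^(n+1) * R₀ * ε := by
      have h2 : (((d:ℝ)+1)*ε + (n:ℝ) * R₀ * ε) + R₀*ε ≤ ((n:ℝ)+2) * (R₀*ε) := by
        nlinarith [hδ0ε]
      calc K * (K^n * (((d:ℝ)+1)*ε + (n:ℝ) * R₀ * ε) + K^n * R₀ * ε)
          = (K^n * K) * ((((d:ℝ)+1)*ε + (n:ℝ) * R₀ * ε) + R₀*ε) := by ring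
        _ ≤ (K^n * K) * (((n:ℝ)+2) * (R₀*ε)) := by
            apply mul_le_mul_of_nonneg_left h2 (by positivity)
        _ = ((n:ℝ)+2) * K^(n+1) * R₀ * ε := by rw [pow_succ]; ring
    have hF : List.Forall₂ (fun p q => (∀ i j, |p.1 i j| ≤ B) ∧ (∀ i, |p.2 i| ≤ B) ∧
        (∀ i j, |p.1 i j - q.1 i j| ≤ ε) ∧ (∀ i, |p.2 i - q.2 i| ≤ ε))
        mid (List.ofFn (fun i : Fin n =>
          ((fun a b => pk ((mid.get (Fin.cast hlen'.symm i)).1 a b)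
              ((hmid _ (hmem i)).1 a b),
            fun a => pk ((mid.get (Fin.cast hlen'.symm i)).2 a)
              ((hmid _ (hmem i)).2 a)) :
            (Fin M → Fin M → ℝ) × (Fin M → ℝ)))) := by
      rw [List.forall₂_iff_get]
      refine ⟨by simp [hlen'], fun i h1 h2 => ?_⟩
      rw [List.get_ofFn]
      have hm := hmid _ (mid.get_mem ⟨i, h1⟩)
      exact ⟨hm.1, hm.2, fun a b_ => hpkd _ _, fun a => hpkd _ _⟩
    have hmb := mid_bound φ Λ hΛ hlip M hM1 B ε hB1 (le_of_lt hε0) hε1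
      mid _ hF R₀ (((d:ℝ)+1)*ε)
      (fun k => (∑ j', W1 k j' * x j') + b1 k)
      (fun k => (∑ j', pk (W1 k j') (hW1 k j') * x j') + pk (b1 k) (hb1 k))
      hR01 hR0B hφ0 (by positivity) hz hzd
    have hpow_eq : (3*Λ*B*(M:ℝ)) ^ mid.length = K^n := by rw [hlen', hKdef]
    have hcast_eq : ((mid.length : ℝ)) = (n:ℝ) := by rw [hlen']
    rw [hpow_eq, hcast_eq] at hmb
    obtain ⟨hm1, hm2⟩ := hmb
    have hrow := row_bound φ Λ hΛ hlip M hM1 B ε (K^n * R₀)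
      (K^n * (((d:ℝ)+1)*ε + (n:ℝ) * R₀ * ε))
      hB1 (le_of_lt hε0) hε1 hδn hRn1 hRnB hφ0n
      (WL 0) (fun j => pk (WL 0 j) (hWL 0 j)) (bL 0) (pk (bL 0) (hbL 0))
      _ _
      (hWL 0) (hbL 0) (fun j => hpkd _ (hWL 0 j)) (hpkd _ (hbL 0)) hm1 hm2
    rw [← hKdef] at hrow
    rw [hgg' x, hg' x 0]
    exact le_trans hrow.2 hstep

set_option maxHeartbeats 1600000 in
/-- **Lemma C.2 (covering number bound)**: for a `Λ`-Lipschitz activation with `Λ ≥ 1` and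
`B ≥ max{1, |φ(0)|/(Λ(d+1))}`, the class `H^{φ,L}(d, 1, M, B)` admits a `τ`-cover `S` in the
uniform norm on `[0,1]^d` with
`log |S| ≤ 2(L+d)M² log(4^{L+1} d (ΛM)^L B^{L+1} / τ)`. -/
theorem covering_number_bound (φ : ℝ → ℝ) (Λ : ℝ) (hΛ : 1 ≤ Λ)
    (hlip : ∀ x y : ℝ, |φ x - φ y| ≤ Λ * |x - y|)
    (d M L : ℕ) (hd : 0 < d) (hM : 0 < M) (hL : 2 ≤ L)
    (τ : ℝ) (hτ0 : 0 < τ) (hτ1 : τ ≤ 1)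
    (B : ℝ) (hB : max 1 (|φ 0| / (Λ * ((d : ℝ) + 1))) ≤ B) :
    ∃ S : Finset ((Fin d → ℝ) → ℝ),
      Real.log S.card ≤
        2 * ((L : ℝ) + d) * (M : ℝ) ^ 2 *
          Real.log (4 ^ (L + 1) * d * (Λ * M) ^ L * B ^ (L + 1) / τ) ∧
      ∀ g : (Fin d → ℝ) → ℝ, IsNNScalar φ L d M B g →
        ∃ h ∈ S, ∀ x ∈ Set.Icc (0 : Fin d → ℝ) 1, |g x - h x| ≤ τ := by
  classical
  obtain ⟨n, rfl⟩ : ∃ n, L = n + 2 := ⟨L - 2, by omega⟩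
  have hB1 : (1:ℝ) ≤ B := le_trans (le_max_left _ _) hB
  have hd1 : (1:ℝ) ≤ d := by exact_mod_cast hd
  have hM1 : (1:ℝ) ≤ M := by exact_mod_cast hM
  have hΛB : 1 ≤ Λ * B := by
    nlinarith [mul_le_mul hΛ hB1 zero_le_one (by linarith : (0:ℝ) ≤ Λ)]
  have hΛBM : 1 ≤ Λ * B * (M:ℝ) := by
    nlinarith [mul_le_mul hΛB hM1 zero_le_one (by linarith : (0:ℝ) ≤ Λ * B)]
  have hΛM : 1 ≤ Λ * (M:ℝ) := by
    nlinarith [mul_le_mul hΛ hM1 zero_le_one (by linarith : (0:ℝ) ≤ Λ)]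
  set K := 3*Λ*B*(M:ℝ) with hKdef
  have hK1 : 1 ≤ K := by rw [hKdef]; nlinarith
  have hK0 : 0 < K := by linarith
  set R₀ := B*((d:ℝ)+1) with hR0def
  have hR0B : B ≤ R₀ := by nlinarith
  have hR01 : 1 ≤ R₀ := by linarith
  have hφ0 : |φ 0| ≤ Λ * R₀ := by
    have h2 := le_trans (le_max_right _ _) hB
    have hpos : 0 < Λ * ((d:ℝ)+1) := by nlinarith
    rw [div_le_iff₀ hpos] at h2
    have : B * (Λ * ((d:ℝ)+1)) = Λ * R₀ := by rw [hR0def]; ring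
    linarith
  have hKpow1 : ∀ m : ℕ, 1 ≤ K ^ m := fun m => one_le_pow₀ hK1
  set D := ((n:ℝ)+2) * K^(n+1) * R₀ with hDdef
  have hD1 : 1 ≤ D := by
    have hn0 : (0:ℝ) ≤ n := Nat.cast_nonneg n
    have ha : (1:ℝ) ≤ ((n:ℝ)+2)*K^(n+1) := by
      have := mul_le_mul_of_nonneg_left (hKpow1 (n+1)) (by linarith : (0:ℝ) ≤ (n:ℝ)+2)
      linarith
    nlinarith [mul_le_mul ha hR01 zero_le_one (by linarith : (0:ℝ) ≤ ((n:ℝ)+2)*K^(n+1))]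
  have hD0 : 0 < D := by linarith
  set ε := τ / D with hεdef
  have hε0 : 0 < ε := div_pos hτ0 hD0
  have hε1 : ε ≤ 1 := by
    rw [hεdef, div_le_one hD0]; linarith
  have hτeq : D * ε = τ := by
    rw [hεdef]; field_simp
  set N := ⌈B / ε⌉₊ with hNdef
  have hBε1 : 1 ≤ B / ε := (one_le_div hε0).2 (by linarith)
  have hN0 : 0 < N := Nat.ceil_pos.2 (by linarith)
  have hNB : B ≤ ε * N := by
    have h := Nat.le_ceil (B / ε)
    rw [div_le_iff₀ hε0] at h
    rw [← hNdef] at h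
    linarith [h]
  have hcov := grid_cover B ε N (by linarith) hε0 hNB
  set G := (Finset.range N).image (fun k : ℕ => -B + ε * (2 * k + 1)) with hGdef
  have hGcard : G.card ≤ N :=
    le_trans Finset.card_image_le (le_of_eq (Finset.card_range N))
  set P := M*d + M + n*(M*M+M) + M + 1 with hPdef
  refine ⟨(paramGrid d M n G).image (nnEval φ d M n), ?_, ?_⟩
  · -- cardinality bound
    have hcard : ((paramGrid d M n G).image (nnEval φ d M n)).card ≤ N ^ P := by
      calc ((paramGrid d M n G).image (nnEval φ d M n)).card
          ≤ (paramGrid d M n G).card := Finset.card_image_le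
        _ = G.card ^ P := by rw [paramGrid_card d M n G, hPdef]
        _ ≤ N ^ P := Nat.pow_le_pow_left hGcard P
    have hceil : (N:ℝ) ≤ B/ε + 1 := le_of_lt (Nat.ceil_lt_add_one (by positivity))
    have hN2 : (N:ℝ) ≤ 2*(B/ε) := by linarith
    have hKpow : K^(n+1) = 3^(n+1)*(Λ*(M:ℝ))^(n+1)*B^(n+1) := by
      rw [hKdef, show 3*Λ*B*(M:ℝ) = 3*(Λ*(M:ℝ))*B by ring, mul_pow, mul_pow]
    have hcore : 2*(B*D) ≤ 4^(n+2+1)*(d:ℝ)*(Λ*(M:ℝ))^(n+2)*B^(n+2+1) := by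
      have hb34 : ((n:ℝ)+2) * 3^(n+1) ≤ 4^(n+2) := by
        have := bernoulli34 (n+1)
        push_cast at this
        calc ((n:ℝ)+2) * 3^(n+1) = ((n:ℝ)+1+1) * 3^(n+1) := by ring
          _ ≤ 4^(n+1+1) := this
          _ = 4^(n+2) := by norm_num
      calc 2*(B*D) = (2*(((n:ℝ)+2)*3^(n+1))) * (((d:ℝ)+1) *
              ((Λ*(M:ℝ))^(n+1) * B^(n+2+1))) := by
            rw [hDdef, hKpow, hR0def]; ring
        _ ≤ (2*(4^(n+2))) * ((2*(d:ℝ)) * ((Λ*(M:ℝ))^(n+2) * B^(n+2+1))) := by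
            have hA' : 2*(((n:ℝ)+2)*3^(n+1)) ≤ 2*(4^(n+2)) := by linarith
            have hB' : ((d:ℝ)+1) ≤ 2*(d:ℝ) := by linarith
            have hC' : (Λ*(M:ℝ))^(n+1) ≤ (Λ*(M:ℝ))^(n+2) :=
              pow_le_pow_right₀ hΛM (Nat.le_succ (n+1))
            have hE0 : (0:ℝ) ≤ B^(n+2+1) := by positivity
            have h1 : (Λ*(M:ℝ))^(n+1) * B^(n+2+1) ≤ (Λ*(M:ℝ))^(n+2) * B^(n+2+1) :=
              mul_le_mul hC' le_rfl hE0 (by positivity)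
            have h2 : ((d:ℝ)+1) * ((Λ*(M:ℝ))^(n+1) * B^(n+2+1))
                ≤ (2*(d:ℝ)) * ((Λ*(M:ℝ))^(n+2) * B^(n+2+1)) := by
              apply mul_le_mul hB' h1 (by positivity) (by positivity)
            apply mul_le_mul hA' h2 (by positivity) (by positivity)
        _ = 4^(n+2+1)*(d:ℝ)*(Λ*(M:ℝ))^(n+2)*B^(n+2+1) := by ring
    have hNA : (N:ℝ) ≤ 4^(n+2+1)*(d:ℝ)*(Λ*(M:ℝ))^(n+2)*B^(n+2+1)/τ := by
      have hBED : B/ε = B*D/τ := by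
        rw [hεdef]; field_simp
      rw [hBED] at hN2
      calc (N:ℝ) ≤ 2*(B*D/τ) := hN2
        _ = 2*(B*D)/τ := by ring
        _ ≤ 4^(n+2+1)*(d:ℝ)*(Λ*(M:ℝ))^(n+2)*B^(n+2+1)/τ := by
            exact (div_le_div_iff_of_pos_right hτ0).2 hcore
    have hN1R : (1:ℝ) ≤ (N:ℝ) := by exact_mod_cast hN0
    have hA1 : (1:ℝ) ≤ 4^(n+2+1)*(d:ℝ)*(Λ*(M:ℝ))^(n+2)*B^(n+2+1)/τ := le_trans hN1R hNA
    have hlogA0 : 0 ≤ Real.log (4^(n+2+1)*(d:ℝ)*(Λ*(M:ℝ))^(n+2)*B^(n+2+1)/τ) :=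
      Real.log_nonneg hA1
    have hMM : (M:ℝ) ≤ (M:ℝ)^2 := by nlinarith
    have hPle : (P:ℝ) ≤ 2*(((n:ℝ)+2)+(d:ℝ))*(M:ℝ)^2 := by
      rw [hPdef]; push_cast
      nlinarith [mul_nonneg (Nat.cast_nonneg n : (0:ℝ) ≤ (n:ℝ)) (sub_nonneg.2 hMM),
        mul_le_mul_of_nonneg_left hMM (by linarith : (0:ℝ) ≤ (d:ℝ)), hMM, hM1, hd1]
    have hcoef : (0:ℝ) ≤ 2*(((n:ℝ)+2)+(d:ℝ)) * (M:ℝ)^2 := by positivity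
    rcases Nat.eq_zero_or_pos ((paramGrid d M n G).image (nnEval φ d M n)).card with h0 | hpos
    · rw [h0]
      simp only [Nat.cast_zero, Real.log_zero]
      push_cast
      exact mul_nonneg hcoef hlogA0
    · have hlog1 : Real.log ((paramGrid d M n G).image (nnEval φ d M n)).card
          ≤ (P:ℝ) * Real.log N := by
        rw [← Real.log_pow]
        exact Real.log_le_log (by exact_mod_cast hpos) (by exact_mod_cast hcard)
      have hlog2 : Real.log (N:ℝ) ≤
          Real.log (4^(n+2+1)*(d:ℝ)*(Λ*(M:ℝ))^(n+2)*B^(n+2+1)/τ) :=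
        Real.log_le_log (by linarith) hNA
      push_cast
      calc Real.log ((paramGrid d M n G).image (nnEval φ d M n)).card
          ≤ (P:ℝ) * Real.log N := hlog1
        _ ≤ (P:ℝ) * Real.log (4^(n+2+1)*(d:ℝ)*(Λ*(M:ℝ))^(n+2)*B^(n+2+1)/τ) :=
            mul_le_mul_of_nonneg_left hlog2 (Nat.cast_nonneg P)
        _ ≤ 2*(((n:ℝ)+2)+(d:ℝ))*(M:ℝ)^2 *
            Real.log (4^(n+2+1)*(d:ℝ)*(Λ*(M:ℝ))^(n+2)*B^(n+2+1)/τ) :=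
            mul_le_mul_of_nonneg_right hPle hlogA0
  · intro g hg
    obtain ⟨θ, hθG, hest⟩ := net_approx φ Λ hΛ hlip d M n hd1 hM1 B ε hB1 hε0 hε1
      (by rw [hR0def] at hφ0; exact hφ0) G hcov g hg
    refine ⟨nnEval φ d M n θ, Finset.mem_image_of_mem _ hθG, fun x hx => ?_⟩
    have h := hest x hx
    have heq : ((n:ℝ)+2) * (3*Λ*B*(M:ℝ))^(n+1) * (B*((d:ℝ)+1)) * ε = τ := by
      rw [← hKdef, ← hR0def, ← hτeq, hDdef]
    linarith [h]
end

section
/- Let I ⊂ ℝ be a closed interval of length l ≥ 0, and let h : ℝ → ℝ be any affine function, h(x) = αx + β with α, β ∈ ℝ. Then ∫_I (x² − h(x))² dx ≥ l⁵/180. -/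
open MeasureTheory

/-- **Lemma D.1**: for any closed interval `I = [a,b]` of length `l = b − a ≥ 0` and any
affine function `h(x) = αx + β`, `∫_I (x² − h(x))² dx ≥ l⁵/180`. -/
theorem quadratic_affine_L2_lower_bound (a b : ℝ) (hab : a ≤ b) (α β : ℝ) :
    (b - a) ^ 5 / 180 ≤ ∫ x in Set.Icc a b, (x ^ 2 - (α * x + β)) ^ 2 := by
  have hI : (∫ x in Set.Icc a b, (x ^ 2 - (α * x + β)) ^ 2)
      = ∫ x in a..b, (x ^ 2 - (α * x + β)) ^ 2 := by
    rw [intervalIntegral.integral_of_le hab, MeasureTheory.integral_Icc_eq_integral_Ioc]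
  set F : ℝ → ℝ := fun x => x ^ 5 / 5 - α * x ^ 4 / 2 + (α ^ 2 - 2 * β) * x ^ 3 / 3
      + α * β * x ^ 2 + β ^ 2 * x with hF
  have hderiv : ∀ x ∈ Set.uIcc a b, HasDerivAt F ((x ^ 2 - (α * x + β)) ^ 2) x := by
    intro x _
    have : HasDerivAt F (5 * x ^ 4 / 5 - α * (4 * x ^ 3) / 2
        + (α ^ 2 - 2 * β) * (3 * x ^ 2) / 3 + α * β * (2 * x) + β ^ 2 * 1) x := by
      apply HasDerivAt.add
      apply HasDerivAt.add
      apply HasDerivAt.add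
      apply HasDerivAt.sub
      · exact (hasDerivAt_pow 5 x).div_const 5
      · exact ((hasDerivAt_pow 4 x).const_mul α).div_const 2
      · exact ((hasDerivAt_pow 3 x).const_mul _).div_const 3
      · simpa using (hasDerivAt_pow 2 x).const_mul (α * β)
      · exact (hasDerivAt_id x).const_mul _
    convert this using 1
    ring
  have hcont : IntervalIntegrable (fun x => (x ^ 2 - (α * x + β)) ^ 2) volume a b :=
    (Continuous.intervalIntegrable (by continuity)) a b
  have hFTC : (∫ x in a..b, (x ^ 2 - (α * x + β)) ^ 2) = F b - F a :=
    intervalIntegral.integral_eq_sub_of_hasDerivAt hderiv hcont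
  rw [hI, hFTC]
  have hba : (0:ℝ) ≤ b - a := by linarith
  have h1 : 0 ≤ (b - a) ^ 3 / 12 * (α - (a + b)) ^ 2 :=
    mul_nonneg (div_nonneg (pow_nonneg hba 3) (by norm_num)) (sq_nonneg _)
  have h2 : 0 ≤ (b - a) * (β + α * (a + b) / 2 - ((a + b) / 2) ^ 2 - (b - a) ^ 2 / 12) ^ 2 :=
    mul_nonneg hba (sq_nonneg _)
  have key : F b - F a - (b - a) ^ 5 / 180
      = (b - a) ^ 3 / 12 * (α - (a + b)) ^ 2
        + (b - a) * (β + α * (a + b) / 2 - ((a + b) / 2) ^ 2 - (b - a) ^ 2 / 12) ^ 2 := by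
    simp only [hF]; ring
  linarith
end

section
/- Let f⋆(x) = x²/2 on [0,1]. For any integers L ≥ 2 and M ≥ 2 and every g ∈ H^{ReLU,L}(1, 1, M, ∞), one has (∫_0^1 (g(x) − f⋆(x))² dx)^{1/2} ≥ (1/(12√5)) · (M+1)^{−2(L−1)}. Consequently, inf_{g ∈ H^{ReLU,L}(1,1,M,∞)} ‖g − f⋆‖_{L²([0,1])} ≥ (1/(12√5)) (M+1)^{−2(L−1)}. -/
open scoped BigOperators
open MeasureTheory

/-- The ReLU function. -/
noncomputable def relu (t : ℝ) : ℝ := max t 0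

/-- Membership in the unconstrained scalar network class `H^{φ,L}(1, 1, M, ∞)` (for `L ≥ 2`):
`x ↦ W_L φ(W_{L−1} φ(⋯ φ(W_1 x + b_1) ⋯) + b_{L−1}) + b_L`, no bound on the parameters. -/
def IsNN1U (φ : ℝ → ℝ) (L M : ℕ) (f : ℝ → ℝ) : Prop :=
  ∃ (W1 : Fin M → ℝ) (b1 : Fin M → ℝ)
    (mid : List ((Fin M → Fin M → ℝ) × (Fin M → ℝ)))
    (WL : Fin M → ℝ) (bL : ℝ),
    mid.length = L - 2 ∧
    ∀ x : ℝ, f x =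
      (∑ j, WL j * φ (midForward φ M mid (fun k => W1 k * x + b1 k) j)) + bL


lemma piece (p q a b : ℝ) (hpq : p ≤ q) :
    (q-p)^5/720 ≤ ∫ x in p..q, (a*x + b - x^2/2)^2 := by
  set F : ℝ → ℝ := fun x => x^5/20 - a*x^4/4 + (a^2-b)*x^3/3 + a*b*x^2 + b^2*x with hF
  have hderiv : ∀ x ∈ Set.uIcc p q, HasDerivAt F ((a*x + b - x^2/2)^2) x := by
    intro x _
    have h1 :=
      (((((hasDerivAt_pow 5 x).div_const 20).sub
        (((hasDerivAt_pow 4 x).const_mul a).div_const 4)).add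
        (((hasDerivAt_pow 3 x).const_mul (a^2-b)).div_const 3)).add
        ((hasDerivAt_pow 2 x).const_mul (a*b))).add
        ((hasDerivAt_id x).const_mul (b^2))
    refine HasDerivAt.congr_deriv h1 ?_
    push_cast; ring
  have hcont : Continuous fun x : ℝ => (a*x + b - x^2/2)^2 := by continuity
  have hint := intervalIntegral.integral_eq_sub_of_hasDerivAt hderiv
    (hcont.intervalIntegrable p q)
  rw [hint]
  have hq : (0:ℝ) ≤ q - p := by linarith
  have key : F q - F p = (q-p)^5/720 + ((p+q)/2 - a)^2 * ((q-p)^3/12)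
      + (((p+q)/2)^2/2 - a*((p+q)/2) - b + (q-p)^2/24)^2 * (q-p) := by
    simp only [hF]; ring
  rw [key]
  have h1 : 0 ≤ ((p+q)/2 - a)^2 * ((q-p)^3/12) :=
    mul_nonneg (sq_nonneg _) (div_nonneg (pow_nonneg hq 3) (by norm_num))
  have h2 : 0 ≤ (((p+q)/2)^2/2 - a*((p+q)/2) - b + (q-p)^2/24)^2 * (q-p) :=
    mul_nonneg (sq_nonneg _) hq
  linarith

def AffOn (f : ℝ → ℝ) (s : Set ℝ) : Prop := ∃ a b : ℝ, ∀ x ∈ s, f x = a * x + b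

def Brk (u v : ℝ) (S : Finset ℝ) (f : ℝ → ℝ) : Prop :=
  ∀ p q : ℝ, u ≤ p → q ≤ v → (Set.Ioo p q ∩ ↑S = ∅) → AffOn f (Set.Ioo p q)

lemma Brk.mono {u v : ℝ} {S T : Finset ℝ} {f : ℝ → ℝ} (hST : S ⊆ T)
    (h : Brk u v S f) : Brk u v T f := by
  intro p q hp hq hdisj
  refine h p q hp hq ?_
  rw [Set.eq_empty_iff_forall_notMem] at hdisj ⊢
  exact fun x hx => hdisj x ⟨hx.1, hST hx.2⟩

lemma Brk.congr {u v : ℝ} {S : Finset ℝ} {f h : ℝ → ℝ} (hfh : ∀ x, f x = h x)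
    (hb : Brk u v S h) : Brk u v S f := by
  intro p q hp hq hdisj
  obtain ⟨a, b, hab⟩ := hb p q hp hq hdisj
  exact ⟨a, b, fun x hx => (hfh x).trans (hab x hx)⟩

lemma Brk.affine (u v a b : ℝ) (S : Finset ℝ) : Brk u v S (fun x => a * x + b) :=
  fun _ _ _ _ _ => ⟨a, b, fun _ _ => rfl⟩

lemma Brk.sum {u v : ℝ} {S : Finset ℝ} {M : ℕ} {f : Fin M → ℝ → ℝ} (c : Fin M → ℝ) (d : ℝ)
    (h : ∀ j, Brk u v S (f j)) : Brk u v S (fun x => (∑ j, c j * f j x) + d) := by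
  intro p q hp hq hdisj
  choose A B hAB using fun j => h j p q hp hq hdisj
  refine ⟨∑ j, c j * A j, (∑ j, c j * B j) + d, fun x hx => ?_⟩
  have : ∀ j ∈ Finset.univ, c j * f j x = c j * A j * x + c j * B j := fun j _ => by
    rw [hAB j x hx]; ring
  show (∑ j, c j * f j x) + d = _
  rw [Finset.sum_congr rfl this, Finset.sum_add_distrib, ← Finset.sum_mul]
  ring

lemma relu_base {u v : ℝ} {S : Finset ℝ} {f : ℝ → ℝ} (hf : Brk u v S f)
    (hdisj : Set.Ioo u v ∩ ↑S = ∅) :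
    ∃ N : Finset ℝ, N.card ≤ 1 ∧ Brk u v (S ∪ N) (fun x => relu (f x)) := by
  rcases le_or_gt v u with hvu | huv
  · exact ⟨∅, by simp, fun p q hp hq _ => ⟨0, 0, fun x hx =>
      absurd (hx.1.trans hx.2) (by push_neg; linarith [hp, hq, hvu])⟩⟩
  obtain ⟨a, b, hab⟩ := hf u v le_rfl le_rfl hdisj
  by_cases ha : a = 0
  · refine ⟨∅, by simp, fun p q hp hq _ => ⟨0, max b 0, fun x hx => ?_⟩⟩
    have hx' : x ∈ Set.Ioo u v := ⟨lt_of_le_of_lt hp hx.1, lt_of_lt_of_le hx.2 hq⟩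
    simp only [relu]; rw [hab x hx', ha]; ring_nf
  · refine ⟨{-b/a}, by simp, fun p q hp hq hdisj2 => ?_⟩
    have hz : (-b/a) ∉ Set.Ioo p q := by
      rw [Set.eq_empty_iff_forall_notMem] at hdisj2
      intro hmem
      exact hdisj2 (-b/a) ⟨hmem, by simp⟩
    have hsub : Set.Ioo p q ⊆ Set.Ioo u v := Set.Ioo_subset_Ioo hp hq
    rw [Set.mem_Ioo] at hz; push_neg at hz
    rcases le_or_gt (-b/a) p with hzp | hpz
    · -- z ≤ p : on (p,q), x > z
      rcases lt_or_gt_of_ne ha with haneg | hapos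
      · -- a < 0 : f x = a x + b < a z + b = 0
        refine ⟨0, 0, fun x hx => ?_⟩
        have := hab x (hsub hx)
        have hxz : -b/a < x := lt_of_le_of_lt hzp hx.1
        have : f x < 0 := by
          rw [this]
          have := (div_lt_iff_of_neg haneg).1 hxz
          linarith
        simp only [relu]; rw [max_eq_right this.le]; ring
      · refine ⟨a, b, fun x hx => ?_⟩
        have hfx := hab x (hsub hx)
        have hxz : -b/a < x := lt_of_le_of_lt hzp hx.1
        have : 0 ≤ f x := by
          rw [hfx]
          have := (div_lt_iff₀ hapos).1 hxz
          linarith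
        simp only [relu]; rw [max_eq_left this, hfx]
    · have hqz : q ≤ -b/a := hz hpz
      rcases lt_or_gt_of_ne ha with haneg | hapos
      · refine ⟨a, b, fun x hx => ?_⟩
        have hfx := hab x (hsub hx)
        have hxz : x < -b/a := lt_of_lt_of_le hx.2 hqz
        have : 0 ≤ f x := by
          rw [hfx]
          have := (lt_div_iff_of_neg haneg).1 hxz
          linarith
        simp only [relu]; rw [max_eq_left this, hfx]
      · refine ⟨0, 0, fun x hx => ?_⟩
        have hfx := hab x (hsub hx)
        have hxz : x < -b/a := lt_of_lt_of_le hx.2 hqz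
        have : f x ≤ 0 := by
          rw [hfx]
          have := (lt_div_iff₀ hapos).1 hxz
          linarith
        simp only [relu]; rw [max_eq_right this]; ring

lemma relu_new_aux : ∀ (n : ℕ) (S : Finset ℝ) (f : ℝ → ℝ) (u v : ℝ), S.card ≤ n →
    Brk u v S f →
    ∃ N : Finset ℝ, N.card ≤ S.card + 1 ∧ Brk u v (S ∪ N) (fun x => relu (f x)) := by
  intro n
  induction n with
  | zero =>
    intro S f u v hcard hf
    have hS : S = ∅ := Finset.card_eq_zero.1 (Nat.le_zero.1 hcard)
    obtain ⟨N, hN, hb⟩ := relu_base hf (by simp [hS])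
    exact ⟨N, hN.trans (by omega), hb⟩
  | succ n IH =>
    intro S f u v hcard hf
    by_cases hex : ∃ s ∈ S, s ∈ Set.Ioo u v
    · obtain ⟨s, hsS, hsuv⟩ := hex
      classical
      set S₁ := S.filter (fun t => t < s) with hS₁
      set S₂ := S.filter (fun t => s < t) with hS₂
      have hd : Disjoint S₁ S₂ := by
        rw [Finset.disjoint_left]
        intro t h1 h2
        rw [hS₁, Finset.mem_filter] at h1
        rw [hS₂, Finset.mem_filter] at h2
        linarith [h1.2, h2.2]
      have hsnot : s ∉ S₁ ∪ S₂ := by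
        simp [hS₁, hS₂, Finset.mem_union, Finset.mem_filter]
      have hsub : insert s (S₁ ∪ S₂) ⊆ S := by
        intro t ht
        rcases Finset.mem_insert.1 ht with rfl | ht
        · exact hsS
        · rcases Finset.mem_union.1 ht with h | h
          · exact (Finset.mem_filter.1 h).1
          · exact (Finset.mem_filter.1 h).1
      have hcards : S₁.card + S₂.card + 1 ≤ S.card := by
        have h1 := Finset.card_le_card hsub
        rw [Finset.card_insert_of_notMem hsnot, Finset.card_union_of_disjoint hd] at h1
        omega
      have hb1 : Brk u s S₁ f := by
        intro p q hp hq hdisj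
        refine hf p q hp (hq.trans hsuv.2.le) ?_
        rw [Set.eq_empty_iff_forall_notMem] at hdisj ⊢
        intro x hx
        exact hdisj x ⟨hx.1, Finset.mem_coe.2 (Finset.mem_filter.2
          ⟨Finset.mem_coe.1 hx.2, lt_of_lt_of_le hx.1.2 hq⟩)⟩
      have hb2 : Brk s v S₂ f := by
        intro p q hp hq hdisj
        refine hf p q (hsuv.1.le.trans hp) hq ?_
        rw [Set.eq_empty_iff_forall_notMem] at hdisj ⊢
        intro x hx
        exact hdisj x ⟨hx.1, Finset.mem_coe.2 (Finset.mem_filter.2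
          ⟨Finset.mem_coe.1 hx.2, lt_of_le_of_lt hp hx.1.1⟩)⟩
      obtain ⟨N₁, hN₁c, hN₁⟩ := IH S₁ f u s (by omega) hb1
      obtain ⟨N₂, hN₂c, hN₂⟩ := IH S₂ f s v (by omega) hb2
      refine ⟨N₁ ∪ N₂, ?_, ?_⟩
      · calc (N₁ ∪ N₂).card ≤ N₁.card + N₂.card := Finset.card_union_le _ _
          _ ≤ S₁.card + 1 + (S₂.card + 1) := by omega
          _ ≤ S.card + 1 := by omega
      · intro p q hp hq hdisj
        have hsnotin : s ∉ Set.Ioo p q := by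
          rw [Set.eq_empty_iff_forall_notMem] at hdisj
          intro hmem
          exact hdisj s ⟨hmem, by simp [hsS]⟩
        rw [Set.mem_Ioo] at hsnotin; push_neg at hsnotin
        rcases le_or_gt q s with hqs | hsq
        · refine hN₁ p q hp hqs ?_
          rw [Set.eq_empty_iff_forall_notMem] at hdisj ⊢
          intro x hx
          refine hdisj x ⟨hx.1, ?_⟩
          rcases Finset.mem_union.1 (Finset.mem_coe.1 hx.2) with h | h
          · exact Finset.mem_coe.2 (Finset.mem_union_left _ ((Finset.filter_subset _ _) h))
          · exact Finset.mem_coe.2 (Finset.mem_union_right _ (Finset.mem_union_left _ h))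
        · have hsp : s ≤ p := by
            by_contra hc
            push_neg at hc
            exact absurd (hsnotin hc) (not_le.2 hsq)
          refine hN₂ p q hsp hq ?_
          rw [Set.eq_empty_iff_forall_notMem] at hdisj ⊢
          intro x hx
          refine hdisj x ⟨hx.1, ?_⟩
          rcases Finset.mem_union.1 (Finset.mem_coe.1 hx.2) with h | h
          · exact Finset.mem_coe.2 (Finset.mem_union_left _ ((Finset.filter_subset _ _) h))
          · exact Finset.mem_coe.2 (Finset.mem_union_right _ (Finset.mem_union_right _ h))
    · push_neg at hex
      have : Set.Ioo u v ∩ ↑S = ∅ := by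
        rw [Set.eq_empty_iff_forall_notMem]
        intro x hx
        exact hex x (Finset.mem_coe.1 hx.2) hx.1
      obtain ⟨N, hN, hb⟩ := relu_base hf this
      exact ⟨N, hN.trans (by omega), hb⟩

lemma relu_new {S : Finset ℝ} {f : ℝ → ℝ} {u v : ℝ} (hf : Brk u v S f) :
    ∃ N : Finset ℝ, N.card ≤ S.card + 1 ∧ Brk u v (S ∪ N) (fun x => relu (f x)) :=
  relu_new_aux S.card S f u v le_rfl hf

lemma cont_relu : Continuous relu := continuous_id.max continuous_const

lemma cont_mid (M : ℕ) : ∀ (mid : List ((Fin M → Fin M → ℝ) × (Fin M → ℝ)))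
    (z : ℝ → Fin M → ℝ), (∀ j, Continuous fun x => z x j) →
    ∀ j, Continuous fun x => midForward relu M mid (z x) j := by
  intro mid
  induction mid with
  | nil => intro z hz j; exact hz j
  | cons layer rest IH =>
    intro z hz j
    have : ∀ i, Continuous fun x => (∑ k, layer.1 i k * relu (z x k)) + layer.2 i := by
      intro i
      apply Continuous.add _ continuous_const
      exact continuous_finset_sum _ fun k _ =>
        continuous_const.mul (cont_relu.comp (hz k))
    exact IH _ this j

lemma mid_brk (M : ℕ) : ∀ (mid : List ((Fin M → Fin M → ℝ) × (Fin M → ℝ)))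
    (z : ℝ → Fin M → ℝ) (S : Finset ℝ) (u v : ℝ),
    (∀ j, Brk u v S (fun x => z x j)) →
    ∃ T : Finset ℝ, T.card + 1 ≤ (M+1)^(mid.length) * (S.card + 1) ∧
      ∀ j, Brk u v T (fun x => midForward relu M mid (z x) j) := by
  intro mid
  induction mid with
  | nil =>
    intro z S u v hz
    exact ⟨S, by simp, fun j => hz j⟩
  | cons layer rest IH =>
    intro z S u v hz
    classical
    choose N hNc hNb using fun j => relu_new (hz j)
    set U : Finset ℝ := S ∪ Finset.univ.biUnion N with hU
    have hUcard : U.card + 1 ≤ (M+1) * (S.card + 1) := by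
      have h1 : U.card ≤ S.card + (Finset.univ.biUnion N).card := Finset.card_union_le _ _
      have h2 : (Finset.univ.biUnion N).card ≤ ∑ j : Fin M, (N j).card :=
        Finset.card_biUnion_le
      have h3 : ∑ j : Fin M, (N j).card ≤ ∑ _j : Fin M, (S.card + 1) :=
        Finset.sum_le_sum fun j _ => hNc j
      have h4 : ∑ _j : Fin M, (S.card + 1) = M * (S.card + 1) := by
        rw [Finset.sum_const, Finset.card_univ, Fintype.card_fin, smul_eq_mul]
      nlinarith [h1, h2, h3]
    have hznew : ∀ i, Brk u v U (fun x => (∑ j, layer.1 i j * relu (z x j)) + layer.2 i) := by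
      intro i
      apply Brk.sum
      intro j
      exact (hNb j).mono (Finset.union_subset_union_right (Finset.subset_biUnion_of_mem N
        (Finset.mem_univ j)))
    obtain ⟨T, hTc, hTb⟩ := IH _ U u v hznew
    refine ⟨T, ?_, fun j => hTb j⟩
    calc T.card + 1 ≤ (M+1)^(rest.length) * (U.card + 1) := hTc
      _ ≤ (M+1)^(rest.length) * ((M+1) * (S.card + 1)) := Nat.mul_le_mul_left _ hUcard
      _ = (M+1)^((layer :: rest).length) * (S.card + 1) := by
        rw [List.length_cons, pow_succ]; ring

lemma radon (x y m n : ℝ) (hx : 0 ≤ x) (hy : 0 ≤ y) (hm : 1 ≤ m) (hn : 1 ≤ n) :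
    (x+y)^5/(m+n)^4 ≤ x^5/m^4 + y^5/n^4 := by
  have hm0 : (0:ℝ) < m := by linarith
  have hn0 : (0:ℝ) < n := by linarith
  have hmn : (0:ℝ) < m + n := by linarith
  have hc := (convexOn_pow 5).2 (Set.mem_Ici.2 (by positivity : (0:ℝ) ≤ x/m))
    (Set.mem_Ici.2 (by positivity : (0:ℝ) ≤ y/n)) (by positivity : (0:ℝ) ≤ m/(m+n))
    (by positivity : (0:ℝ) ≤ n/(m+n)) (by field_simp)
  simp only [smul_eq_mul] at hc
  have e1 : m/(m+n) * (x/m) + n/(m+n) * (y/n) = (x+y)/(m+n) := by field_simp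
  have e2 : m/(m+n) * (x/m)^5 + n/(m+n) * (y/n)^5 = (x^5/m^4 + y^5/n^4)/(m+n) := by
    field_simp
  rw [e1, e2] at hc
  have := (le_div_iff₀ hmn).1 hc
  calc (x+y)^5/(m+n)^4 = ((x+y)/(m+n))^5 * (m+n) := by field_simp
    _ ≤ x^5/m^4 + y^5/n^4 := this

lemma aff_piece {g : ℝ → ℝ} {a b : ℝ} (hab : a ≤ b) (haff : AffOn g (Set.Ioo a b)) :
    (b-a)^5/720 ≤ ∫ x in a..b, (g x - x^2/2)^2 := by
  obtain ⟨c, d, hcd⟩ := haff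
  have heq : ∫ x in a..b, (g x - x^2/2)^2 = ∫ x in a..b, (c*x + d - x^2/2)^2 := by
    rw [intervalIntegral.integral_of_le hab, intervalIntegral.integral_of_le hab,
      MeasureTheory.integral_Ioc_eq_integral_Ioo, MeasureTheory.integral_Ioc_eq_integral_Ioo]
    apply MeasureTheory.setIntegral_congr_fun measurableSet_Ioo
    intro x hx
    show (g x - x^2/2)^2 = (c*x + d - x^2/2)^2
    rw [hcd x hx]
  rw [heq]
  exact piece a b c d hab

lemma lower_aux (g : ℝ → ℝ) (hg : Continuous g) : ∀ (n : ℕ) (S : Finset ℝ), S.card ≤ n →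
    ∀ a b : ℝ, a ≤ b → Brk a b S g →
    (b-a)^5 / (720 * ((S.card : ℝ)+1)^4) ≤ ∫ x in a..b, (g x - x^2/2)^2 := by
  have hcont : Continuous fun x : ℝ => (g x - x^2/2)^2 :=
    ((hg.sub ((continuous_pow 2).div_const 2)).pow 2)
  intro n
  induction n with
  | zero =>
    intro S hcard a b hab hb
    have hS : S = ∅ := Finset.card_eq_zero.1 (Nat.le_zero.1 hcard)
    have h1 := aff_piece hab (hb a b le_rfl le_rfl (by simp [hS]))
    have : (b-a)^5 / (720 * ((S.card : ℝ)+1)^4) = (b-a)^5/720 := by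
      rw [hS]; norm_num
    linarith [this ▸ h1, h1, this]
  | succ n IH =>
    intro S hcard a b hab hb
    by_cases hex : ∃ s ∈ S, s ∈ Set.Ioo a b
    · obtain ⟨s, hsS, hsab⟩ := hex
      classical
      set S₁ := S.filter (fun t => t < s) with hS₁
      set S₂ := S.filter (fun t => s < t) with hS₂
      have hd : Disjoint S₁ S₂ := by
        rw [Finset.disjoint_left]
        intro t h1 h2
        rw [hS₁, Finset.mem_filter] at h1
        rw [hS₂, Finset.mem_filter] at h2
        linarith [h1.2, h2.2]
      have hsnot : s ∉ S₁ ∪ S₂ := by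
        simp [hS₁, hS₂, Finset.mem_union, Finset.mem_filter]
      have hsub : insert s (S₁ ∪ S₂) ⊆ S := by
        intro t ht
        rcases Finset.mem_insert.1 ht with rfl | ht
        · exact hsS
        · rcases Finset.mem_union.1 ht with h | h
          · exact (Finset.mem_filter.1 h).1
          · exact (Finset.mem_filter.1 h).1
      have hcards : S₁.card + S₂.card + 1 ≤ S.card := by
        have h1 := Finset.card_le_card hsub
        rw [Finset.card_insert_of_notMem hsnot, Finset.card_union_of_disjoint hd] at h1
        omega
      have hb1 : Brk a s S₁ g := by
        intro p q hp hq hdisj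
        refine hb p q hp (hq.trans hsab.2.le) ?_
        rw [Set.eq_empty_iff_forall_notMem] at hdisj ⊢
        intro x hx
        exact hdisj x ⟨hx.1, Finset.mem_coe.2 (Finset.mem_filter.2
          ⟨Finset.mem_coe.1 hx.2, lt_of_lt_of_le hx.1.2 hq⟩)⟩
      have hb2 : Brk s b S₂ g := by
        intro p q hp hq hdisj
        refine hb p q (hsab.1.le.trans hp) hq ?_
        rw [Set.eq_empty_iff_forall_notMem] at hdisj ⊢
        intro x hx
        exact hdisj x ⟨hx.1, Finset.mem_coe.2 (Finset.mem_filter.2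
          ⟨Finset.mem_coe.1 hx.2, lt_of_le_of_lt hp hx.1.1⟩)⟩
      have hI1 := IH S₁ (by omega) a s hsab.1.le hb1
      have hI2 := IH S₂ (by omega) s b hsab.2.le hb2
      have hsplit : (∫ x in a..s, (g x - x^2/2)^2) + ∫ x in s..b, (g x - x^2/2)^2
          = ∫ x in a..b, (g x - x^2/2)^2 :=
        intervalIntegral.integral_add_adjacent_intervals
          (hcont.intervalIntegrable a s) (hcont.intervalIntegrable s b)
      rw [← hsplit]
      have hrad := radon (s-a) (b-s) ((S₁.card : ℝ)+1) ((S₂.card : ℝ)+1)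
        (by linarith [hsab.1.le]) (by linarith [hsab.2.le])
        (by have := Nat.cast_nonneg (α := ℝ) S₁.card; linarith)
        (by have := Nat.cast_nonneg (α := ℝ) S₂.card; linarith)
      have hmono : (b-a)^5 / (720 * ((S.card : ℝ)+1)^4) ≤
          (s-a+(b-s))^5/(720 * (((S₁.card : ℝ)+1)+((S₂.card : ℝ)+1))^4) := by
        have hba : (0:ℝ) ≤ b - a := by linarith
        have hsum : ((S₁.card : ℝ)+1)+((S₂.card : ℝ)+1) ≤ (S.card : ℝ) + 1 := by
          have : (S₁.card : ℝ) + (S₂.card : ℝ) + 1 ≤ (S.card : ℝ) := by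
            exact_mod_cast hcards
          linarith
        have hpos1 : (0:ℝ) < ((S₁.card : ℝ)+1)+((S₂.card : ℝ)+1) := by positivity
        have heq : s - a + (b - s) = b - a := by ring
        rw [heq]
        apply div_le_div_of_nonneg_left (by positivity) (by positivity)
        have : (((S₁.card : ℝ)+1)+((S₂.card : ℝ)+1))^4 ≤ ((S.card : ℝ) + 1)^4 :=
          pow_le_pow_left₀ (by positivity) hsum 4
        nlinarith [this]
      calc (b-a)^5 / (720 * ((S.card : ℝ)+1)^4)
          ≤ (s-a+(b-s))^5/(720 * (((S₁.card : ℝ)+1)+((S₂.card : ℝ)+1))^4) := hmono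
        _ ≤ (s-a)^5/(720*((S₁.card : ℝ)+1)^4) + (b-s)^5/(720*((S₂.card : ℝ)+1)^4) := by
            have eA : (s-a+(b-s))^5/((((S₁.card : ℝ)+1)+((S₂.card : ℝ)+1))^4)/720
                = (s-a+(b-s))^5/(720*((((S₁.card : ℝ)+1)+((S₂.card : ℝ)+1))^4)) := by
              rw [div_div, mul_comm]
            have eB : (s-a)^5/(((S₁.card : ℝ)+1)^4)/720 = (s-a)^5/(720*((S₁.card : ℝ)+1)^4) := by
              rw [div_div, mul_comm]
            have eC : (b-s)^5/(((S₂.card : ℝ)+1)^4)/720 = (b-s)^5/(720*((S₂.card : ℝ)+1)^4) := by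
              rw [div_div, mul_comm]
            have h1 : (s-a+(b-s))^5/((((S₁.card : ℝ)+1)+((S₂.card : ℝ)+1))^4)/720
                ≤ (s-a)^5/(((S₁.card : ℝ)+1)^4)/720 + (b-s)^5/(((S₂.card : ℝ)+1)^4)/720 := by
              linarith
            rw [eA, eB, eC] at h1
            exact h1
        _ ≤ (∫ x in a..s, (g x - x^2/2)^2) + ∫ x in s..b, (g x - x^2/2)^2 := by
            exact add_le_add hI1 hI2
    · push_neg at hex
      have hdisj : Set.Ioo a b ∩ ↑S = ∅ := by
        rw [Set.eq_empty_iff_forall_notMem]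
        intro x hx
        exact hex x (Finset.mem_coe.1 hx.2) hx.1
      have h1 := aff_piece hab (hb a b le_rfl le_rfl hdisj)
      have hle : (b-a)^5 / (720 * ((S.card : ℝ)+1)^4) ≤ (b-a)^5/720 := by
        have hba : (0:ℝ) ≤ b - a := by linarith
        have h1' : (1:ℝ) ≤ ((S.card : ℝ)+1)^4 := by
          have h0 : (0:ℝ) ≤ (S.card : ℝ) := Nat.cast_nonneg _
          have : (1:ℝ) ≤ (S.card : ℝ) + 1 := by linarith
          calc (1:ℝ) = 1^4 := by norm_num
            _ ≤ ((S.card : ℝ)+1)^4 := pow_le_pow_left₀ (by norm_num) this 4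
        rw [div_le_div_iff₀ (by positivity) (by norm_num)]
        nlinarith [pow_nonneg hba 5]
      linarith

/-- **Lemma D.2 (lower bound for approximating `x²/2` by ReLU networks)**: for any depth
`L ≥ 2` and width `M ≥ 2`, every `g ∈ H^{ReLU,L}(1,1,M,∞)` satisfies
`‖g − x²/2‖_{L²([0,1])} ≥ (1/(12√5)) (M+1)^{−2(L−1)}`. -/
theorem relu_quadratic_lower_bound (L M : ℕ) (hL : 2 ≤ L) (hM : 2 ≤ M)
    (g : ℝ → ℝ) (hg : IsNN1U relu L M g) :
    1 / (12 * Real.sqrt 5) * ((M : ℝ) + 1) ^ (-(2 : ℝ) * ((L : ℝ) - 1)) ≤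
      Real.sqrt (∫ x in Set.Icc (0 : ℝ) 1, (g x - x ^ 2 / 2) ^ 2) := by
  classical
  obtain ⟨W1, b1, mid, WL, bL, hlen, hfx⟩ := hg
  -- breakpoint structure of the network
  have hz : ∀ k : Fin M, Brk 0 1 (∅ : Finset ℝ) (fun x => W1 k * x + b1 k) :=
    fun k => Brk.affine 0 1 (W1 k) (b1 k) ∅
  obtain ⟨T, hTc, hTb⟩ := mid_brk M mid (fun x k => W1 k * x + b1 k) ∅ 0 1 hz
  simp only [Finset.card_empty] at hTc
  choose N hNc hNb using fun j => relu_new (hTb j)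
  set U : Finset ℝ := T ∪ Finset.univ.biUnion N with hU
  have hUcard : U.card + 1 ≤ (M+1) * (T.card + 1) := by
    have h1 : U.card ≤ T.card + (Finset.univ.biUnion N).card := Finset.card_union_le _ _
    have h2 : (Finset.univ.biUnion N).card ≤ ∑ j : Fin M, (N j).card := Finset.card_biUnion_le
    have h3 : ∑ j : Fin M, (N j).card ≤ ∑ _j : Fin M, (T.card + 1) :=
      Finset.sum_le_sum fun j _ => hNc j
    have h4 : ∑ _j : Fin M, (T.card + 1) = M * (T.card + 1) := by
      rw [Finset.sum_const, Finset.card_univ, Fintype.card_fin, smul_eq_mul]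
    nlinarith [h1, h2, h3]
  have hUK : U.card + 1 ≤ (M+1)^(L-1) := by
    have h5 : (M+1) * (T.card + 1) ≤ (M+1) * ((M+1)^(mid.length) * (0 + 1)) :=
      Nat.mul_le_mul_left _ (by simpa using hTc)
    have h6 : (M+1) * ((M+1)^(mid.length) * (0+1)) = (M+1)^(L-1) := by
      rw [hlen]
      have h7 : L - 2 + 1 = L - 1 := by omega
      calc (M+1) * ((M+1)^(L-2) * (0+1)) = (M+1)^(L-2) * (M+1) := by ring
        _ = (M+1)^(L-2+1) := (pow_succ _ _).symm
        _ = (M+1)^(L-1) := by rw [h7]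
    omega
  have hgB : Brk 0 1 U g := by
    refine Brk.congr hfx ?_
    exact Brk.sum WL bL fun j => (hNb j).mono
      (Finset.union_subset_union_right (Finset.subset_biUnion_of_mem N (Finset.mem_univ j)))
  have hgc : Continuous g := by
    have he : g = fun x => (∑ j, WL j * relu (midForward relu M mid
        (fun k => W1 k * x + b1 k) j)) + bL := funext hfx
    rw [he]
    apply Continuous.add _ continuous_const
    apply continuous_finset_sum
    intro j _
    exact continuous_const.mul (cont_relu.comp
      (cont_mid M mid (fun x k => W1 k * x + b1 k)
        (fun k => (continuous_const.mul continuous_id).add continuous_const) j))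
  have hlow := lower_aux g hgc U.card U le_rfl 0 1 (by norm_num) hgB
  have hIcc : (∫ x in Set.Icc (0:ℝ) 1, (g x - x ^ 2 / 2) ^ 2)
      = ∫ x in (0:ℝ)..1, (g x - x^2/2)^2 := by
    rw [intervalIntegral.integral_of_le (by norm_num : (0:ℝ) ≤ 1),
      MeasureTheory.integral_Icc_eq_integral_Ioc]
  rw [hIcc]
  -- numeric bookkeeping
  set Kr : ℝ := ((M:ℝ)+1)^(L-1) with hKr
  have hM1 : (0:ℝ) < (M:ℝ) + 1 := by positivity
  have hKrpos : (0:ℝ) < Kr := by positivity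
  have hrpow : ((M : ℝ) + 1) ^ (-(2 : ℝ) * ((L : ℝ) - 1)) = (Kr^2)⁻¹ := by
    have h1 : ((L:ℝ) - 1) = ((L - 1 : ℕ) : ℝ) := by
      rw [Nat.cast_sub (by omega : 1 ≤ L)]; norm_num
    have h2 : (-(2:ℝ) * ((L:ℝ) - 1)) = -(((2*(L-1) : ℕ)) : ℝ) := by
      rw [h1]; push_cast; ring
    rw [h2, Real.rpow_neg hM1.le, Real.rpow_natCast]
    congr 1
    rw [hKr, ← pow_mul, Nat.mul_comm]
  rw [hrpow]
  have hsqrt5 : (0:ℝ) < Real.sqrt 5 := Real.sqrt_pos.2 (by norm_num)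
  have hc_nonneg : (0:ℝ) ≤ 1 / (12 * Real.sqrt 5) * (Kr^2)⁻¹ := by positivity
  have hcsq : (1 / (12 * Real.sqrt 5) * (Kr^2)⁻¹)^2 = 1 / (720 * Kr^4) := by
    have h5 : Real.sqrt 5 ^ 2 = 5 := Real.sq_sqrt (by norm_num)
    field_simp
    nlinarith [h5, hKrpos]
  have hchain : 1 / (720 * Kr^4) ≤ ∫ x in (0:ℝ)..1, (g x - x^2/2)^2 := by
    have hcast : ((U.card : ℝ) + 1) ≤ Kr := by
      have : ((U.card + 1 : ℕ) : ℝ) ≤ (((M+1)^(L-1) : ℕ) : ℝ) := Nat.cast_le.2 hUK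
      push_cast at this
      convert this using 2
    have hpow4 : ((U.card : ℝ) + 1)^4 ≤ Kr^4 :=
      pow_le_pow_left₀ (by positivity) hcast 4
    have h1 : 1 / (720 * Kr^4) ≤ 1 / (720 * ((U.card : ℝ) + 1)^4) := by
      apply div_le_div_of_nonneg_left (by norm_num) (by positivity)
      nlinarith [hpow4]
    have h2 : ((1:ℝ) - 0)^5 / (720 * ((U.card : ℝ) + 1)^4)
        = 1 / (720 * ((U.card : ℝ) + 1)^4) := by norm_num
    rw [h2] at hlow
    linarith
  calc 1 / (12 * Real.sqrt 5) * (Kr^2)⁻¹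
      = Real.sqrt ((1 / (12 * Real.sqrt 5) * (Kr^2)⁻¹)^2) :=
        (Real.sqrt_sq hc_nonneg).symm
    _ ≤ Real.sqrt (∫ x in (0:ℝ)..1, (g x - x^2/2)^2) := by
        apply Real.sqrt_le_sqrt
        rw [hcsq]
        exact hchain
end
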